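/- arXiv:1604.05825 — 3 statements merged into one kernel-verified Lean document; each statement's English description precedes it below -/
import Mathlib

section
/- For each integer n ≥ 2 there exists a constant η_n, depending only on n, with 0 ≤ η_n < 1, such that for every ordering O ∈ C_c^(n), every real symmetric n×n matrix A, and the matrix A' obtained from A by applying one sweep of the cyclic Jacobi method defined by the strategy I_O with all rotation angles in the interval [−π/4, π/4], one has S(A')² ≤ η_n·S(A)². -/
namespace BlockJacobi

open scoped BigOperators

attribute [local instance] Classical.propDecidable

noncomputable section

/-- Offset (starting index) of block `r` for the partition `c`. -/
def off (c : ℕ → ℕ) (r : ℕ) : ℕ := ∑ k ∈ Finset.range r, c k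

/-- `t` belongs to block `r`. -/
def inBlk (c : ℕ → ℕ) (r t : ℕ) : Prop := off c r ≤ t ∧ t < off c r + c r

/-- `s` and `t` belong to the same block (among the first `m` blocks). -/
def sameBlk (c : ℕ → ℕ) (m s t : ℕ) : Prop := ∃ r, r < m ∧ inBlk c r s ∧ inBlk c r t

/-- `t` belongs to the pivot zone: block `i` or block `j`. -/
def inPiv (c : ℕ → ℕ) (i j t : ℕ) : Prop := inBlk c i t ∨ inBlk c j t

/-- `(c, m)` is a partition of `n` into `m` blocks (0-based blocks `0,…,m-1`). -/
def IsPartition (n m : ℕ) (c : ℕ → ℕ) : Prop :=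
  2 ≤ m ∧ (∀ i < m, 1 ≤ c i) ∧ ∑ i ∈ Finset.range m, c i = n

/-- elementary block matrix with (0-based) pivot pair `(i,j)`. -/
def IsElem {n : ℕ} (c : ℕ → ℕ) (i j : ℕ) (U : Matrix (Fin n) (Fin n) ℝ) : Prop :=
  ∀ s t : Fin n, ¬(inPiv c i j (s : ℕ) ∧ inPiv c i j (t : ℕ)) →
    U s t = if s = t then 1 else 0

/-- orthogonality. -/
def Orth {n : ℕ} (U : Matrix (Fin n) (Fin n) ℝ) : Prop := U.transpose * U = 1

/-- Euclidean norm of a vector. -/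
def enorm {ι : Type*} [Fintype ι] (x : ι → ℝ) : ℝ := Real.sqrt (∑ i, x i ^ 2)

/-- smallest singular value of the `(r,r)` diagonal block of `U`. -/
def sigmaMinBlk {n : ℕ} (c : ℕ → ℕ) (r : ℕ) (U : Matrix (Fin n) (Fin n) ℝ) : ℝ :=
  sInf { v : ℝ | ∃ x : Fin n → ℝ,
    (∀ t : Fin n, ¬ inBlk c r (t : ℕ) → x t = 0) ∧ enorm x = 1 ∧
    enorm (fun t : Fin n => if inBlk c r (t : ℕ) then U.mulVec x t else 0) = v }

/-- the constant `γ_{ij}` of the UBC class. -/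
def gammaUBC (c : ℕ → ℕ) (i j : ℕ) : ℝ :=
  3 / Real.sqrt (((4 : ℝ) ^ c i + 6 * (c j : ℝ) - 1) * ((c j : ℝ) + 1))

/-- `U` is in the UBC class with pivot pair `(i,j)`: block structure given by `cs`,
`γ`-bound computed from the partition `cg`. -/
def IsUBC2 {n : ℕ} (cs cg : ℕ → ℕ) (ρ : ℝ) (i j : ℕ) (U : Matrix (Fin n) (Fin n) ℝ) : Prop :=
  IsElem cs i j U ∧ Orth U ∧ sigmaMinBlk cs i U = sigmaMinBlk cs j U ∧
    ρ * gammaUBC cg i j ≤ sigmaMinBlk cs i U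

/-- `U ∈ UBC_π(ρ)` with pivot pair `(i,j)`. -/
def IsUBC {n : ℕ} (c : ℕ → ℕ) (ρ : ℝ) (i j : ℕ) (U : Matrix (Fin n) (Fin n) ℝ) : Prop :=
  IsUBC2 c c ρ i j U

/-- the `(i,j)` pivot submatrix of `A` is diagonal. -/
def PivDiag {n : ℕ} (c : ℕ → ℕ) (i j : ℕ) (A : Matrix (Fin n) (Fin n) ℝ) : Prop :=
  ∀ s t : Fin n, s ≠ t → inPiv c i j (s : ℕ) → inPiv c i j (t : ℕ) → A s t = 0

/-- square of the off-norm `S(A)`. -/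
def offSq {n : ℕ} (A : Matrix (Fin n) (Fin n) ℝ) : ℝ :=
  ∑ s : Fin n, ∑ t : Fin n, if (s : ℕ) < (t : ℕ) then A s t ^ 2 else 0

/-- square of the off-norm of the `(i,j)` pivot submatrix of `A`. -/
def offSqPiv {n : ℕ} (c : ℕ → ℕ) (i j : ℕ) (A : Matrix (Fin n) (Fin n) ℝ) : ℝ :=
  ∑ s : Fin n, ∑ t : Fin n,
    if (s : ℕ) < (t : ℕ) ∧ inPiv c i j (s : ℕ) ∧ inPiv c i j (t : ℕ) then A s t ^ 2 else 0

/-- Frobenius norm. -/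
def frob {n : ℕ} (A : Matrix (Fin n) (Fin n) ℝ) : ℝ :=
  Real.sqrt (∑ s : Fin n, ∑ t : Fin n, A s t ^ 2)

/-- One sweep of the block Jacobi method along the pivot list `L`; block structure from
`cs`, UBC bound computed from the partition `cg`. -/
def Sweep2 {n : ℕ} (cs cg : ℕ → ℕ) (ρ : ℝ) (L : List (ℕ × ℕ))
    (A A' : Matrix (Fin n) (Fin n) ℝ) : Prop :=
  ∃ B : ℕ → Matrix (Fin n) (Fin n) ℝ,
    B 0 = A ∧ B L.length = A' ∧
    ∀ (k : ℕ) (hk : k < L.length),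
      ∃ U : Matrix (Fin n) (Fin n) ℝ,
        IsUBC2 cs cg ρ (L.get ⟨k, hk⟩).1 (L.get ⟨k, hk⟩).2 U ∧
        B (k + 1) = U.transpose * B k * U ∧
        PivDiag cs (L.get ⟨k, hk⟩).1 (L.get ⟨k, hk⟩).2 (B (k + 1))

/-- One sweep of the block Jacobi method with `UBC_π(ρ)` transformations. -/
def Sweep {n : ℕ} (c : ℕ → ℕ) (ρ : ℝ) (L : List (ℕ × ℕ))
    (A A' : Matrix (Fin n) (Fin n) ℝ) : Prop :=
  Sweep2 c c ρ L A A'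

/-- `L ∈ O(P_m)` (0-based pairs). -/
def SeqOn (m : ℕ) (L : List (ℕ × ℕ)) : Prop :=
  (∀ p ∈ L, p.1 < p.2 ∧ p.2 < m) ∧ ∀ i j : ℕ, i < j → j < m → (i, j) ∈ L

/-- `L ∈ O(S)` for `S ⊆ P_m`. -/
def SeqOnSet (S : Set (ℕ × ℕ)) (L : List (ℕ × ℕ)) : Prop :=
  (∀ p ∈ L, p ∈ S) ∧ ∀ p ∈ S, p ∈ L

/-- the class `B_c^(m)` of column-wise orderings (0-based). -/
def memBc (m : ℕ) (L : List (ℕ × ℕ)) : Prop :=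
  ∃ τ : ℕ → ℕ → ℕ,
    (∀ j, Set.BijOn (τ j) (Set.Iio j) (Set.Iio j)) ∧
    L = (List.range' 1 (m - 1)).flatMap fun j => (List.range j).map fun a => (τ j a, j)

/-- the class `B_r^(m)` of row-wise orderings (0-based). -/
def memBr (m : ℕ) (L : List (ℕ × ℕ)) : Prop :=
  ∃ σ : ℕ → ℕ → ℕ,
    (∀ i, Set.BijOn (σ i) (Set.Ico (i + 1) m) (Set.Ico (i + 1) m)) ∧
    L = ((List.range (m - 1)).reverse).flatMap fun i =>
      (List.range' (i + 1) (m - 1 - i)).map fun b => (i, σ i b)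

/-- the class `B_sp^(m)` of serial orderings with permutations. -/
def memBsp (m : ℕ) (L : List (ℕ × ℕ)) : Prop :=
  memBc m L ∨ memBc m L.reverse ∨ memBr m L ∨ memBr m L.reverse

/-- the quasi-cyclic class `B̄_c^(m)`. -/
def memBcQ (m : ℕ) (L : List (ℕ × ℕ)) : Prop :=
  ∃ (τ : ℕ → ℕ → ℕ) (E : ℕ → List (ℕ × ℕ)),
    (∀ j, Set.BijOn (τ j) (Set.Iio j) (Set.Iio j)) ∧
    (∀ j, ∀ p ∈ E j, p.1 < p.2 ∧ p.2 ≤ j) ∧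
    L = (List.range' 1 (m - 1)).flatMap fun j =>
      ((List.range j).map fun a => (τ j a, j)) ++ (if j = 1 then [] else E j)

/-- one admissible transposition (on lists of `α`'s carrying pairs via `pr`). -/
def AdjSwapG {α : Type*} (pr : α → ℕ × ℕ) (L L' : List α) : Prop :=
  ∃ (l₁ l₂ : List α) (a b : α),
    ({(pr a).1, (pr a).2} ∩ {(pr b).1, (pr b).2} : Set ℕ) = ∅ ∧
    L = l₁ ++ a :: b :: l₂ ∧ L' = l₁ ++ b :: a :: l₂

/-- equivalence (finitely many admissible transpositions). -/
def EquivG {α : Type*} (pr : α → ℕ × ℕ) : List α → List α → Prop :=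
  Relation.ReflTransGen (AdjSwapG pr)

/-- shift-equivalence. -/
def ShiftG {α : Type*} (L L' : List α) : Prop :=
  ∃ l₁ l₂ : List α, L = l₁ ++ l₂ ∧ L' = l₂ ++ l₁

/-- weak equivalence. -/
def WeakG {α : Type*} (pr : α → ℕ × ℕ) : List α → List α → Prop :=
  Relation.ReflTransGen fun X Y => EquivG pr X Y ∨ ShiftG X Y

/-- equivalence of pivot sequences. -/
def PEquivL : List (ℕ × ℕ) → List (ℕ × ℕ) → Prop := EquivG id

/-- shift-equivalence of pivot sequences. -/
def ShiftEq : List (ℕ × ℕ) → List (ℕ × ℕ) → Prop := ShiftG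

/-- weak equivalence of pivot sequences. -/
def WeakEq : List (ℕ × ℕ) → List (ℕ × ℕ) → Prop := WeakG id

/-- weak equivalence realized by a chain containing exactly `d` shift-equivalent
adjacent pairs (all other adjacent pairs being equivalent). -/
def WeakChainD (d : ℕ) (L L' : List (ℕ × ℕ)) : Prop :=
  ∃ (r : ℕ) (cs : ℕ → List (ℕ × ℕ)) (s : Finset ℕ),
    cs 0 = L ∧ cs r = L' ∧ s.card = d ∧ (∀ k ∈ s, k < r) ∧
    ∀ k < r, if k ∈ s then ShiftEq (cs k) (cs (k + 1)) else PEquivL (cs k) (cs (k + 1))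

/-- `q` is a permutation of `{0,…,m-1}`. -/
def IsPermOn (m : ℕ) (q : ℕ → ℕ) : Prop := Set.BijOn q (Set.Iio m) (Set.Iio m)

/-- `O(q)`: apply a permutation to all pairs of the sequence. -/
def pApply (q : ℕ → ℕ) (L : List (ℕ × ℕ)) : List (ℕ × ℕ) :=
  L.map fun p => if q p.1 < q p.2 then (q p.1, q p.2) else (q p.2, q p.1)

/-- `compSeq q t = q_t ∘ q_{t-1} ∘ ⋯ ∘ q_1`. -/
def compSeq (q : ℕ → ℕ → ℕ) : ℕ → ℕ → ℕ
  | 0 => id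
  | t + 1 => q (t + 1) ∘ compSeq q t

/-- the class `B_spg^(m)`. -/
def memBspg (m : ℕ) (L : List (ℕ × ℕ)) : Prop :=
  ∃ L' L'' : List (ℕ × ℕ), memBsp m L'' ∧
    ((∃ q, IsPermOn m q ∧ L' = pApply q L) ∧ PEquivL L' L'' ∨
      PEquivL L L' ∧ ∃ q, IsPermOn m q ∧ L'' = pApply q L')

/-- the class `B_sg^(m)` of generalized serial orderings. -/
def memBsg (m : ℕ) (L : List (ℕ × ℕ)) : Prop :=
  ∃ L' L'' : List (ℕ × ℕ), memBsp m L'' ∧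
    ((∃ q, IsPermOn m q ∧ L' = pApply q L) ∧ WeakEq L' L'' ∨
      WeakEq L L' ∧ ∃ q, IsPermOn m q ∧ L'' = pApply q L')

/-- index set of the entries of the off-diagonal blocks in the upper triangle;
it has cardinality `K`. -/
def OffI (n m : ℕ) (c : ℕ → ℕ) : Type :=
  { p : Fin n × Fin n // (p.1 : ℕ) < (p.2 : ℕ) ∧ ¬ sameBlk c m (p.1 : ℕ) (p.2 : ℕ) }

instance (n m : ℕ) (c : ℕ → ℕ) : Fintype (OffI n m c) := by
  unfold OffI; exact Subtype.fintype _

instance (n m : ℕ) (c : ℕ → ℕ) : DecidableEq (OffI n m c) := Classical.decEq _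

/-- `vec_{π,0}⁻¹` : the symmetric matrix with zero diagonal blocks built from a vector. -/
def symOf {n m : ℕ} {c : ℕ → ℕ} (a : OffI n m c → ℝ) : Matrix (Fin n) (Fin n) ℝ :=
  fun s t =>
    if h : (s : ℕ) < (t : ℕ) ∧ ¬ sameBlk c m (s : ℕ) (t : ℕ) then a ⟨(s, t), h⟩
    else if h' : (t : ℕ) < (s : ℕ) ∧ ¬ sameBlk c m (t : ℕ) (s : ℕ) then a ⟨(t, s), h'⟩
    else 0

/-- `N_{ij}` : set the pivot submatrix to zero. -/
def nij {n : ℕ} (c : ℕ → ℕ) (i j : ℕ) (M : Matrix (Fin n) (Fin n) ℝ) :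
    Matrix (Fin n) (Fin n) ℝ :=
  fun s t => if inPiv c i j (s : ℕ) ∧ inPiv c i j (t : ℕ) then 0 else M s t

/-- the block Jacobi annihilator `R_{ij}(Û)` (as a `K×K` matrix), parametrized by the
full elementary block matrix `U` with pivot pair `(i,j)` and pivot submatrix `Û`. -/
def annih (n m : ℕ) (c : ℕ → ℕ) (i j : ℕ) (U : Matrix (Fin n) (Fin n) ℝ) :
    Matrix (OffI n m c) (OffI n m c) ℝ :=
  fun p q => nij c i j (U.transpose * symOf (Pi.single q (1 : ℝ)) * U) p.1.1 p.1.2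

/-- the class `I_{ij}` of block Jacobi annihilators. -/
def Iij (n m : ℕ) (c : ℕ → ℕ) (i j : ℕ) : Set (Matrix (OffI n m c) (OffI n m c) ℝ) :=
  { R | ∃ U : Matrix (Fin n) (Fin n) ℝ, IsElem c i j U ∧ Orth U ∧ R = annih n m c i j U }

/-- the class `I_{ij}^{UBC(ρ)}`. -/
def IijUBC (n m : ℕ) (c : ℕ → ℕ) (ρ : ℝ) (i j : ℕ) :
    Set (Matrix (OffI n m c) (OffI n m c) ℝ) :=
  { R | ∃ U : Matrix (Fin n) (Fin n) ℝ, IsUBC c ρ i j U ∧ R = annih n m c i j U }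

/-- the class `J_O^{UBC_π(ρ)}` of block Jacobi operators. -/
def JopUBC (n m : ℕ) (c : ℕ → ℕ) (ρ : ℝ) (L : List (ℕ × ℕ)) :
    Set (Matrix (OffI n m c) (OffI n m c) ℝ) :=
  { J | ∃ R : ℕ → Matrix (OffI n m c) (OffI n m c) ℝ,
      (∀ (k : ℕ) (hk : k < L.length),
        R k ∈ IijUBC n m c ρ (L.get ⟨k, hk⟩).1 (L.get ⟨k, hk⟩).2) ∧
      J = (((List.range L.length).reverse).map R).prod }

/-- spectral norm (operator 2-norm). -/
def specNorm {ι : Type*} [Fintype ι] (M : Matrix ι ι ℝ) : ℝ :=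
  sSup { v : ℝ | ∃ x : ι → ℝ, enorm x = 1 ∧ enorm (M.mulVec x) = v }

/-- spectral radius. -/
def specRad {ι : Type*} [Fintype ι] (M : Matrix ι ι ℝ) : ℝ :=
  sSup { v : ℝ | ∃ (μ : ℂ) (x : ι → ℂ), x ≠ 0 ∧
    (M.map (fun r : ℝ => (r : ℂ))).mulVec x = μ • x ∧ v = ‖μ‖ }

/-- product `R_{T-1} ⋯ R_1 R_0` of a decorated pivot list. -/
def prodD {n m : ℕ} {c : ℕ → ℕ}
    (L : List ((ℕ × ℕ) × Matrix (OffI n m c) (OffI n m c) ℝ)) :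
    Matrix (OffI n m c) (OffI n m c) ℝ :=
  ((L.map Prod.snd).reverse).prod

/-- plane (Givens) rotation in the `(i,j)` coordinate plane. -/
def rotM (n : ℕ) (i j : ℕ) (φ : ℝ) : Matrix (Fin n) (Fin n) ℝ :=
  fun s t =>
    if (s : ℕ) = i ∧ (t : ℕ) = i then Real.cos φ
    else if (s : ℕ) = j ∧ (t : ℕ) = j then Real.cos φ
    else if (s : ℕ) = i ∧ (t : ℕ) = j then - Real.sin φ
    else if (s : ℕ) = j ∧ (t : ℕ) = i then Real.sin φ
    else if s = t then 1 else 0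

/-- One sweep of the scalar (element-wise) cyclic Jacobi method with rotation
angles in `[-π/4, π/4]`. -/
def ScalarSweep {n : ℕ} (L : List (ℕ × ℕ)) (A A' : Matrix (Fin n) (Fin n) ℝ) : Prop :=
  ∃ (B : ℕ → Matrix (Fin n) (Fin n) ℝ) (φ : ℕ → ℝ),
    B 0 = A ∧ B L.length = A' ∧
    ∀ (k : ℕ) (hk : k < L.length),
      |φ k| ≤ Real.pi / 4 ∧
      B (k + 1) =
        (rotM n (L.get ⟨k, hk⟩).1 (L.get ⟨k, hk⟩).2 (φ k)).transpose * B k *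
          rotM n (L.get ⟨k, hk⟩).1 (L.get ⟨k, hk⟩).2 (φ k) ∧
      ∀ s t : Fin n, (s : ℕ) = (L.get ⟨k, hk⟩).1 → (t : ℕ) = (L.get ⟨k, hk⟩).2 →
        B (k + 1) s t = 0

/-- `k` concatenated copies of a list. -/
def iterList {α : Type*} : ℕ → List α → List α
  | 0, _ => []
  | k + 1, L => L ++ iterList k L

/-!
A rotation that annihilates its pivot keeps the Frobenius norm and lowers `S²` by exactly the
square of the pivot, so with `ε² = S(A)² - S(A')²` every pivot of the sweep is at most `ε`. It
remains to bound every off-diagonal entry of `A` by `K ε`, column by column. During the phases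
before column `t` only indices `< t` are rotated, and each rotation at most doubles the entries of
that leading block. In phase `t`, until `(p, t)` is the pivot, a rotation in the plane `(q, t)`
replaces `a_tp` by `-s a_qp + c a_tp` with `a_qp` not yet touched in this phase; since `|φ| ≤ π/4`
gives `c ≥ 1/2`, the entry `a_tp` at the start of the phase is bounded in terms of `ε` and the
leading block. Running the earlier phases backwards, each rotation at most doubles column `t`.
Hence `S(A)² ≤ κ (S(A)² - S(A')²)` for a constant `κ` depending on `n`, i.e.
`S(A')² ≤ κ / (κ + 1) · S(A)²`.
-/

open Matrix Real

section Rotation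

variable {n : ℕ} {i j : Fin n} {φ : ℝ}

theorem rotM_apply_fst (hij : i ≠ j) (b : Fin n) :
    rotM n i j φ b i = (if b = i then cos φ else 0) + if b = j then sin φ else 0 := by
  by_cases hbi : b = i <;> by_cases hbj : b = j <;> simp_all [rotM, Fin.val_inj]

theorem rotM_apply_snd (hij : i ≠ j) (b : Fin n) :
    rotM n i j φ b j = (if b = i then -sin φ else 0) + if b = j then cos φ else 0 := by
  by_cases hbi : b = i <;> by_cases hbj : b = j <;> simp_all [rotM, Fin.val_inj, Ne.symm hij]

theorem rotM_apply_of_ne {v : Fin n} (hvi : v ≠ i) (hvj : v ≠ j) (b : Fin n) :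
    rotM n i j φ b v = (1 : Matrix (Fin n) (Fin n) ℝ) b v := by
  simp [rotM, Fin.val_inj, hvi, hvj, one_apply]

theorem mul_rotM_apply_fst (hij : i ≠ j) (M : Matrix (Fin n) (Fin n) ℝ) (a : Fin n) :
    (M * rotM n i j φ) a i = cos φ * M a i + sin φ * M a j := by
  simp [mul_apply, rotM_apply_fst hij, mul_add, Finset.sum_add_distrib, mul_comm]

theorem mul_rotM_apply_snd (hij : i ≠ j) (M : Matrix (Fin n) (Fin n) ℝ) (a : Fin n) :
    (M * rotM n i j φ) a j = -sin φ * M a i + cos φ * M a j := by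
  simp [mul_apply, rotM_apply_snd hij, mul_add, Finset.sum_add_distrib, mul_comm]

theorem mul_rotM_apply_of_ne {v : Fin n} (hvi : v ≠ i) (hvj : v ≠ j)
    (M : Matrix (Fin n) (Fin n) ℝ) (a : Fin n) : (M * rotM n i j φ) a v = M a v := by
  simp [mul_apply, rotM_apply_of_ne hvi hvj, one_apply]

theorem rotM_transpose_mul_apply (M : Matrix (Fin n) (Fin n) ℝ) (u b : Fin n) :
    ((rotM n i j φ)ᵀ * M) u b = (Mᵀ * rotM n i j φ) b u := by
  rw [← transpose_apply (Mᵀ * _), transpose_mul, transpose_transpose]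

theorem sum_eq_add_add_sum_compl (hij : i ≠ j) (f : Fin n → ℝ) :
    ∑ v, f v = f i + f j + ∑ v ∈ {i, j}ᶜ, f v := by
  rw [← Finset.sum_add_sum_compl {i, j} f, Finset.sum_pair hij]

theorem sum_sq_mul_rotM_apply (hij : i ≠ j) (M : Matrix (Fin n) (Fin n) ℝ) (a : Fin n) :
    ∑ v, (M * rotM n i j φ) a v ^ 2 = ∑ v, M a v ^ 2 := by
  have hcompl : ∀ v ∈ ({i, j}ᶜ : Finset (Fin n)), (M * rotM n i j φ) a v ^ 2 = M a v ^ 2 := by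
    intro v hv
    simp only [Finset.mem_compl, Finset.mem_insert, Finset.mem_singleton, not_or] at hv
    rw [mul_rotM_apply_of_ne hv.1 hv.2]
  rw [sum_eq_add_add_sum_compl hij, sum_eq_add_add_sum_compl hij (fun v => M a v ^ 2),
    Finset.sum_congr rfl hcompl, mul_rotM_apply_fst hij, mul_rotM_apply_snd hij]
  linear_combination (M a i ^ 2 + M a j ^ 2) * sin_sq_add_cos_sq φ

variable (B : Matrix (Fin n) (Fin n) ℝ)

theorem sum_sq_conj_rotM (hij : i ≠ j) :
    ∑ u, ∑ v, ((rotM n i j φ)ᵀ * B * rotM n i j φ) u v ^ 2 = ∑ u, ∑ v, B u v ^ 2 := by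
  simp_rw [sum_sq_mul_rotM_apply hij, rotM_transpose_mul_apply]
  rw [Finset.sum_comm]
  simp_rw [sum_sq_mul_rotM_apply hij, transpose_apply]
  exact Finset.sum_comm

theorem conj_rotM_apply_of_ne {u v : Fin n} (hui : u ≠ i) (huj : u ≠ j) (hvi : v ≠ i)
    (hvj : v ≠ j) : ((rotM n i j φ)ᵀ * B * rotM n i j φ) u v = B u v := by
  rw [mul_rotM_apply_of_ne hvi hvj, rotM_transpose_mul_apply, mul_rotM_apply_of_ne hui huj,
    transpose_apply]

theorem conj_rotM_apply_fst (hij : i ≠ j) {v : Fin n} (hvi : v ≠ i) (hvj : v ≠ j) :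
    ((rotM n i j φ)ᵀ * B * rotM n i j φ) i v = cos φ * B i v + sin φ * B j v := by
  rw [mul_rotM_apply_of_ne hvi hvj, rotM_transpose_mul_apply, mul_rotM_apply_fst hij]
  rfl

theorem conj_rotM_apply_snd (hij : i ≠ j) {v : Fin n} (hvi : v ≠ i) (hvj : v ≠ j) :
    ((rotM n i j φ)ᵀ * B * rotM n i j φ) j v = -sin φ * B i v + cos φ * B j v := by
  rw [mul_rotM_apply_of_ne hvi hvj, rotM_transpose_mul_apply, mul_rotM_apply_snd hij]
  rfl

theorem conj_rotM_pivot_sq (hB : B.IsSymm) (hij : i ≠ j) :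
    ((rotM n i j φ)ᵀ * B * rotM n i j φ) i i ^ 2 + ((rotM n i j φ)ᵀ * B * rotM n i j φ) j j ^ 2
      + 2 * ((rotM n i j φ)ᵀ * B * rotM n i j φ) i j ^ 2
      = B i i ^ 2 + B j j ^ 2 + 2 * B i j ^ 2 := by
  simp only [mul_rotM_apply_fst hij, mul_rotM_apply_snd hij, rotM_transpose_mul_apply,
    transpose_apply, hB.apply i j]
  linear_combination ((cos φ ^ 2 + sin φ ^ 2 + 1) * (B i i ^ 2 + B j j ^ 2 + 2 * B i j ^ 2))
    * cos_sq_add_sin_sq φ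

end Rotation

theorem two_mul_offSq {n : ℕ} {A : Matrix (Fin n) (Fin n) ℝ} (hA : A.IsSymm) :
    2 * offSq A = ∑ u, ∑ v, A u v ^ 2 - ∑ u, A u u ^ 2 := by
  have hsplit : ∀ u v, A u v ^ 2 = (if (u : ℕ) < v then A u v ^ 2 else 0)
      + (if (v : ℕ) < u then A v u ^ 2 else 0) + if u = v then A u v ^ 2 else 0 := by
    intro u v
    rcases lt_trichotomy u v with h | rfl | h
    · simp [h, h.ne, not_lt.2 h.le]
    · simp
    · simp [h, h.ne', not_lt.2 h.le, hA.apply]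
  rw [Finset.sum_congr rfl fun u _ => Finset.sum_congr rfl fun v _ => hsplit u v]
  simp only [Finset.sum_add_distrib]
  rw [Finset.sum_comm (f := fun u v : Fin n => if (v : ℕ) < u then A v u ^ 2 else 0)]
  simp only [offSq, Fin.val_fin_lt, Finset.sum_ite_eq, Finset.mem_univ, ↓reduceIte,
    add_sub_cancel_right]
  ring

theorem offSq_conj_rotM {n : ℕ} {i j : Fin n} {φ : ℝ} {B : Matrix (Fin n) (Fin n) ℝ}
    (hB : B.IsSymm) (hij : i ≠ j) (hz : ((rotM n i j φ)ᵀ * B * rotM n i j φ) i j = 0) :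
    offSq ((rotM n i j φ)ᵀ * B * rotM n i j φ) = offSq B - B i j ^ 2 := by
  set B' := (rotM n i j φ)ᵀ * B * rotM n i j φ with hB'
  have hB'symm : B'.IsSymm := by
    simp only [hB', Matrix.IsSymm, Matrix.transpose_mul, Matrix.transpose_transpose, hB.eq,
      Matrix.mul_assoc]
  have hdiag : ∑ u, B' u u ^ 2 = B' i i ^ 2 + B' j j ^ 2 + ∑ u ∈ {i, j}ᶜ, B u u ^ 2 := by
    rw [sum_eq_add_add_sum_compl hij]
    congr 1
    refine Finset.sum_congr rfl fun u hu => ?_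
    simp only [Finset.mem_compl, Finset.mem_insert, Finset.mem_singleton, not_or] at hu
    rw [hB', conj_rotM_apply_of_ne B hu.1 hu.2 hu.1 hu.2]
  have h2 := two_mul_offSq hB'symm
  have h1 := two_mul_offSq hB
  rw [hdiag, sum_sq_conj_rotM B hij] at h2
  rw [sum_eq_add_add_sum_compl hij (fun u => B u u ^ 2)] at h1
  have hpiv := conj_rotM_pivot_sq (φ := φ) B hB hij
  rw [← hB', hz] at hpiv
  linarith

theorem half_le_cos_of_abs_le {φ : ℝ} (hφ : |φ| ≤ π / 4) : 1 / 2 ≤ cos φ := by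
  rw [← cos_abs]
  calc 1 / 2 ≤ √2 / 2 := by gcongr; exact one_le_sqrt.2 one_le_two
    _ = cos (π / 4) := cos_pi_div_four.symm
    _ ≤ cos |φ| := cos_le_cos_of_nonneg_of_le_pi (abs_nonneg φ) (by linarith [pi_pos]) hφ

theorem abs_mul_add_mul_le {c s x y : ℝ} (hc : |c| ≤ 1) (hs : |s| ≤ 1) :
    |c * x + s * y| ≤ |x| + |y| := by
  calc |c * x + s * y| ≤ |c| * |x| + |s| * |y| := by
        rw [← abs_mul, ← abs_mul]; exact abs_add_le _ _
    _ ≤ |x| + |y| := by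
        gcongr <;> apply mul_le_of_le_one_left (abs_nonneg _) <;> assumption

def LeadingOffDiagLE {n : ℕ} (A : Matrix (Fin n) (Fin n) ℝ) (m : ℕ) (M : ℝ) : Prop :=
  ∀ u v : Fin n, u ≠ v → (u : ℕ) < m → (v : ℕ) < m → |A u v| ≤ M

theorem offSq_le_of_leadingOffDiagLE {n : ℕ} {A : Matrix (Fin n) (Fin n) ℝ} {M : ℝ}
    (hA : LeadingOffDiagLE A n M) : offSq A ≤ n ^ 2 * M ^ 2 := by
  calc offSq A ≤ ∑ _u : Fin n, ∑ _v : Fin n, M ^ 2 := by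
        refine Finset.sum_le_sum fun u _ => Finset.sum_le_sum fun v _ => ?_
        split_ifs with huv
        · rw [← sq_abs]
          exact pow_le_pow_left₀ (abs_nonneg _) (hA u v (Fin.ne_of_val_ne huv.ne) u.2 v.2) 2
        · positivity
    _ = n ^ 2 * M ^ 2 := by
        simp only [Finset.sum_const, Finset.card_univ, Fintype.card_fin, nsmul_eq_mul]; ring

def IsJacobiStep {n : ℕ} (B B' : Matrix (Fin n) (Fin n) ℝ) (i j : ℕ) : Prop :=
  ∃ φ : ℝ, |φ| ≤ π / 4 ∧ B' = (rotM n i j φ)ᵀ * B * rotM n i j φ ∧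
    ∀ s t : Fin n, (s : ℕ) = i → (t : ℕ) = j → B' s t = 0

namespace IsJacobiStep

variable {n : ℕ} {B B' : Matrix (Fin n) (Fin n) ℝ} {i j : Fin n}

theorem apply_pivot (h : IsJacobiStep B B' i j) : B' i j = 0 := by
  obtain ⟨-, -, -, hz⟩ := h
  exact hz i j rfl rfl

theorem isSymm (h : IsJacobiStep B B' i j) (hB : B.IsSymm) : B'.IsSymm := by
  obtain ⟨φ, -, rfl, -⟩ := h
  simp only [Matrix.IsSymm, transpose_mul, transpose_transpose, hB.eq, Matrix.mul_assoc]

theorem offSq_eq (h : IsJacobiStep B B' i j) (hB : B.IsSymm) (hij : i ≠ j) :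
    offSq B' = offSq B - B i j ^ 2 := by
  have hz := h.apply_pivot
  obtain ⟨φ, -, rfl, -⟩ := h
  exact offSq_conj_rotM hB hij hz

theorem apply_of_ne (h : IsJacobiStep B B' i j) {u v : Fin n} (hui : u ≠ i) (huj : u ≠ j)
    (hvi : v ≠ i) (hvj : v ≠ j) : B' u v = B u v := by
  obtain ⟨φ, -, rfl, -⟩ := h
  exact conj_rotM_apply_of_ne B hui huj hvi hvj

theorem abs_new_apply_le (h : IsJacobiStep B B' i j) (hij : i ≠ j) {u w : Fin n}
    (hu : u = i ∨ u = j) (hwi : w ≠ i) (hwj : w ≠ j) : |B' u w| ≤ |B i w| + |B j w| := by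
  obtain ⟨φ, -, rfl, -⟩ := h
  rcases hu with rfl | rfl
  · rw [conj_rotM_apply_fst B hij hwi hwj]
    exact abs_mul_add_mul_le (abs_cos_le_one φ) (abs_sin_le_one φ)
  · rw [conj_rotM_apply_snd B hij hwi hwj]
    exact abs_mul_add_mul_le (by rw [abs_neg]; exact abs_sin_le_one φ) (abs_cos_le_one φ)

theorem abs_old_apply_le (h : IsJacobiStep B B' i j) (hij : i ≠ j) {u w : Fin n}
    (hu : u = i ∨ u = j) (hwi : w ≠ i) (hwj : w ≠ j) : |B u w| ≤ |B' i w| + |B' j w| := by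
  obtain ⟨φ, -, rfl, -⟩ := h
  have hfst := conj_rotM_apply_fst (φ := φ) B hij hwi hwj
  have hsnd := conj_rotM_apply_snd (φ := φ) B hij hwi hwj
  rcases hu with rfl | rfl
  · have hinv : B u w = cos φ * ((rotM n u j φ)ᵀ * B * rotM n u j φ) u w
        + -sin φ * ((rotM n u j φ)ᵀ * B * rotM n u j φ) j w := by
      rw [hfst, hsnd]; linear_combination (-B u w) * cos_sq_add_sin_sq φ
    rw [hinv]
    exact abs_mul_add_mul_le (abs_cos_le_one φ) (by rw [abs_neg]; exact abs_sin_le_one φ)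
  · have hinv : B u w = sin φ * ((rotM n i u φ)ᵀ * B * rotM n i u φ) i w
        + cos φ * ((rotM n i u φ)ᵀ * B * rotM n i u φ) u w := by
      rw [hfst, hsnd]; linear_combination (-B u w) * cos_sq_add_sin_sq φ
    rw [hinv]
    exact abs_mul_add_mul_le (abs_sin_le_one φ) (abs_cos_le_one φ)

theorem abs_old_apply_snd_le (h : IsJacobiStep B B' i j) (hij : i ≠ j) {w : Fin n}
    (hwi : w ≠ i) (hwj : w ≠ j) : |B j w| ≤ 2 * (|B' j w| + |B i w|) := by
  obtain ⟨φ, hφ, rfl, -⟩ := h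
  have hc := half_le_cos_of_abs_le hφ
  calc |B j w| ≤ 2 * |cos φ * B j w| := by
        rw [abs_mul, abs_of_pos (a := cos φ) (by linarith)]; nlinarith [abs_nonneg (B j w)]
    _ = 2 * |((rotM n i j φ)ᵀ * B * rotM n i j φ) j w + sin φ * B i w| := by
        rw [conj_rotM_apply_snd B hij hwi hwj]; ring_nf
    _ ≤ 2 * (|((rotM n i j φ)ᵀ * B * rotM n i j φ) j w| + |B i w|) := by
        gcongr
        refine (abs_add_le _ _).trans (add_le_add_right ?_ _)
        rw [abs_mul]
        exact mul_le_of_le_one_left (abs_nonneg _) (abs_sin_le_one φ)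

theorem leadingOffDiagLE (h : IsJacobiStep B B' i j) (hB : B.IsSymm) (hij : i ≠ j) {m : ℕ}
    (him : (i : ℕ) < m) (hjm : (j : ℕ) < m) {M : ℝ} (hM : LeadingOffDiagLE B m M) :
    LeadingOffDiagLE B' m (2 * M) := by
  have hM0 : 0 ≤ M := (abs_nonneg _).trans (hM i j hij him hjm)
  have hB' := h.isSymm hB
  have hpivot : ∀ u w : Fin n, u = i ∨ u = j → (w : ℕ) < m → u ≠ w → |B' u w| ≤ 2 * M := by
    intro u w hu hw huw
    by_cases hw' : w = i ∨ w = j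
    · have hz : B' u w = 0 := by
        rcases hu with rfl | rfl <;> rcases hw' with rfl | rfl
        · exact absurd rfl huw
        · exact h.apply_pivot
        · rw [hB'.apply]; exact h.apply_pivot
        · exact absurd rfl huw
      rw [hz, abs_zero]; positivity
    · push Not at hw'
      calc |B' u w| ≤ |B i w| + |B j w| := h.abs_new_apply_le hij hu hw'.1 hw'.2
        _ ≤ M + M := add_le_add (hM i w (Ne.symm hw'.1) him hw) (hM j w (Ne.symm hw'.2) hjm hw)
        _ = 2 * M := by ring
  intro u v huv hu hv
  by_cases hu' : u = i ∨ u = j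
  · exact hpivot u v hu' hv huv
  by_cases hv' : v = i ∨ v = j
  · rw [← hB'.apply]; exact hpivot v u hv' hu (Ne.symm huv)
  push Not at hu' hv'
  rw [h.apply_of_ne hu'.1 hu'.2 hv'.1 hv'.2]
  linarith [hM u v huv hu hv]

theorem abs_old_apply_col_le (h : IsJacobiStep B B' i j) (hij : i ≠ j) {m : ℕ}
    (him : (i : ℕ) < m) (hjm : (j : ℕ) < m) {w : Fin n} (hw : m ≤ w) {M : ℝ}
    (hM : ∀ u : Fin n, (u : ℕ) < m → |B' u w| ≤ M) {u : Fin n} (hu : (u : ℕ) < m) :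
    |B u w| ≤ 2 * M := by
  have hwi : w ≠ i := by omega
  have hwj : w ≠ j := by omega
  by_cases hu' : u = i ∨ u = j
  · linarith [h.abs_old_apply_le hij hu' hwi hwj, hM i him, hM j hjm]
  push Not at hu'
  rw [← h.apply_of_ne hu'.1 hu'.2 hwi hwj]
  linarith [hM u hu, abs_nonneg (B' u w)]

end IsJacobiStep

theorem choose_two_succ (j : ℕ) : (j + 1).choose 2 = j.choose 2 + j := by
  rw [Nat.choose_succ_succ', Nat.choose_one_right, add_comm]

theorem choose_two_add_lt {j m a : ℕ} (hjm : j < m) (ha : a < j) : j.choose 2 + a < m.choose 2 :=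
  calc j.choose 2 + a < (j + 1).choose 2 := by rw [choose_two_succ]; omega
    _ ≤ m.choose 2 := Nat.choose_le_choose 2 hjm

theorem exists_eq_choose_two_add {k m : ℕ} (hk : k < m.choose 2) :
    ∃ j < m, ∃ a < j, k = j.choose 2 + a := by
  induction m with
  | zero => simp at hk
  | succ m ih =>
    rw [choose_two_succ] at hk
    by_cases hkm : k < m.choose 2
    · obtain ⟨j, hj, a, ha, rfl⟩ := ih hkm
      exact ⟨j, by omega, a, ha, rfl⟩
    · exact ⟨m, by omega, k - m.choose 2, by omega, by omega⟩

/-- `sweepConst (t + 1)` adds to `sweepConst t` the bound for column `t`: the leading block grows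
by at most `2 ^ t.choose 2` during the earlier phases, phase `t` costs `2 ^ t`, and propagating
column `t` back through the earlier phases costs `2 ^ t.choose 2` again. -/
def sweepConst : ℕ → ℕ
  | 0 => 0
  | t + 1 => sweepConst t + 2 ^ (t + 1).choose 2 * (1 + 2 ^ (t.choose 2 + 1) * sweepConst t)

/-- Phase `j` of a column-cyclic sweep consists of the rotations in the planes `(τ j a, j)`,
`a < j`; it starts after the `j.choose 2` rotations of the earlier phases. -/
structure IsColumnSweep (n : ℕ) (τ : ℕ → ℕ → ℕ) (B : ℕ → Matrix (Fin n) (Fin n) ℝ) : Prop where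
  bijOn : ∀ j, Set.BijOn (τ j) (Set.Iio j) (Set.Iio j)
  isSymm_zero : (B 0).IsSymm
  step : ∀ j a, j < n → a < j →
    IsJacobiStep (B (j.choose 2 + a)) (B (j.choose 2 + a + 1)) (τ j a) j

namespace IsColumnSweep

variable {n : ℕ} {τ : ℕ → ℕ → ℕ} {B : ℕ → Matrix (Fin n) (Fin n) ℝ}

theorem exists_step (hS : IsColumnSweep n τ B) {m k : ℕ} (hm : m ≤ n) (hk : k < m.choose 2) :
    ∃ i j : Fin n, i ≠ j ∧ (i : ℕ) < m ∧ (j : ℕ) < m ∧ IsJacobiStep (B k) (B (k + 1)) i j := by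
  obtain ⟨j, hj, a, ha, rfl⟩ := exists_eq_choose_two_add hk
  have hτ : τ j a < j := (hS.bijOn j).mapsTo ha
  exact ⟨⟨τ j a, by omega⟩, ⟨j, by omega⟩, Fin.ne_of_val_ne hτ.ne, hτ.trans hj, hj,
    hS.step j a (by omega) ha⟩

theorem isSymm (hS : IsColumnSweep n τ B) {k : ℕ} (hk : k ≤ n.choose 2) : (B k).IsSymm := by
  induction k with
  | zero => exact hS.isSymm_zero
  | succ k ih =>
    obtain ⟨i, j, -, -, -, h⟩ := hS.exists_step le_rfl hk
    exact h.isSymm (ih (by omega))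

theorem offSq_antitone (hS : IsColumnSweep n τ B) {k l : ℕ} (hkl : k ≤ l) (hl : l ≤ n.choose 2) :
    offSq (B l) ≤ offSq (B k) := by
  induction l, hkl using Nat.le_induction with
  | base => exact le_rfl
  | succ l hkl ih =>
    obtain ⟨i, j, hij, -, -, h⟩ := hS.exists_step le_rfl hl
    rw [h.offSq_eq (hS.isSymm (by omega)) hij]
    linarith [ih (by omega), sq_nonneg (B l i j)]

theorem leadingOffDiagLE_choose (hS : IsColumnSweep n τ B) {m : ℕ} (hm : m ≤ n) {M : ℝ}
    (h0 : LeadingOffDiagLE (B 0) m M) :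
    LeadingOffDiagLE (B (m.choose 2)) m (2 ^ m.choose 2 * M) := by
  suffices ∀ k ≤ m.choose 2, LeadingOffDiagLE (B k) m (2 ^ k * M) from this _ le_rfl
  intro k hk
  induction k with
  | zero => simpa using h0
  | succ k ih =>
    obtain ⟨i, j, hij, him, hjm, h⟩ := hS.exists_step hm hk
    have hB := hS.isSymm ((by omega : k ≤ m.choose 2).trans (Nat.choose_le_choose 2 hm))
    rw [pow_succ', mul_assoc]
    exact h.leadingOffDiagLE hB hij him hjm (ih (by omega))

theorem abs_apply_zero_col_le (hS : IsColumnSweep n τ B) (t : Fin n) {W : ℝ}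
    (hW : ∀ u : Fin n, (u : ℕ) < t → |B ((t : ℕ).choose 2) u t| ≤ W)
    {u : Fin n} (hu : (u : ℕ) < t) : |B 0 u t| ≤ 2 ^ (t : ℕ).choose 2 * W := by
  suffices ∀ d ≤ (t : ℕ).choose 2, ∀ u : Fin n, (u : ℕ) < t →
      |B ((t : ℕ).choose 2 - d) u t| ≤ 2 ^ d * W by
    simpa using this _ le_rfl u hu
  intro d hd
  induction d with
  | zero => simpa using hW
  | succ d ih =>
    obtain ⟨i, j, hij, hit, hjt, h⟩ := hS.exists_step t.2.le (k := (t : ℕ).choose 2 - (d + 1))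
      (by omega)
    rw [show (t : ℕ).choose 2 - (d + 1) + 1 = (t : ℕ).choose 2 - d by omega] at h
    intro u hu
    rw [pow_succ', mul_assoc]
    exact h.abs_old_apply_col_le hij hit hjt le_rfl (ih (by omega)) hu

theorem apply_phase_eq (hS : IsColumnSweep n τ B) (t : Fin n) {a : ℕ} (ha : a ≤ t)
    {r p : Fin n} (hr : (r : ℕ) < t) (hp : (p : ℕ) < t)
    (hfresh : ∀ b < a, τ t b ≠ r ∧ τ t b ≠ p) :
    B ((t : ℕ).choose 2 + a) r p = B ((t : ℕ).choose 2) r p := by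
  induction a with
  | zero => rfl
  | succ a ih =>
    set i : Fin n := ⟨τ t a, ((hS.bijOn t).mapsTo (by omega : a < t)).trans t.2⟩
    have hi' : (i : ℕ) = τ t a := rfl
    have hfa := hfresh a (by omega)
    have hstep : IsJacobiStep (B ((t : ℕ).choose 2 + a)) (B ((t : ℕ).choose 2 + a + 1)) i t :=
      hS.step t a t.2 (by omega)
    rw [← add_assoc, hstep.apply_of_ne (by omega) (by omega) (by omega) (by omega)]
    exact ih (by omega) fun b hb => hfresh b (by omega)

theorem abs_apply_phase_le_succ (hS : IsColumnSweep n τ B) (t : Fin n) {G : ℝ}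
    (hblock : LeadingOffDiagLE (B ((t : ℕ).choose 2)) t G) {p : Fin n} (hp : (p : ℕ) < t)
    {b : ℕ} (hb : b < t) (hfresh : ∀ b' ≤ b, τ t b' ≠ p) :
    |B ((t : ℕ).choose 2 + b) t p| ≤ 2 * (|B ((t : ℕ).choose 2 + b + 1) t p| + G) := by
  have hτb : τ t b < t := (hS.bijOn t).mapsTo hb
  set i : Fin n := ⟨τ t b, hτb.trans t.2⟩
  have hi : (i : ℕ) = τ t b := rfl
  have hstep : IsJacobiStep (B ((t : ℕ).choose 2 + b)) (B ((t : ℕ).choose 2 + b + 1)) i t :=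
    hS.step t b t.2 hb
  have hpb := hfresh b le_rfl
  have huntouched : B ((t : ℕ).choose 2 + b) i p = B ((t : ℕ).choose 2) i p := by
    refine hS.apply_phase_eq t hb.le hτb hp fun b' hb' => ⟨fun h => ?_, hfresh b' hb'.le⟩
    have := (hS.bijOn t).injOn (hb'.trans hb) hb h
    omega
  have hG := hblock i p (by omega) hτb hp
  have := hstep.abs_old_apply_snd_le (by omega) (w := p) (by omega) (by omega)
  rw [huntouched] at this
  linarith

theorem abs_apply_phase_start_le (hS : IsColumnSweep n τ B) (t : Fin n) {ε G : ℝ}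
    (hε : ∀ (a : ℕ) (i : Fin n), a < t → (i : ℕ) = τ t a → |B ((t : ℕ).choose 2 + a) i t| ≤ ε)
    (hG : 0 ≤ G) (hblock : LeadingOffDiagLE (B ((t : ℕ).choose 2)) t G)
    {p : Fin n} (hp : (p : ℕ) < t) : |B ((t : ℕ).choose 2) p t| ≤ 2 ^ (t : ℕ) * (ε + 2 * G) := by
  set T := (t : ℕ).choose 2
  obtain ⟨a₀, ha₀, hτa₀⟩ := (hS.bijOn t).surjOn hp
  have ha₀t : a₀ < t := ha₀
  have hdecay : ∀ b ≤ a₀, |B T t p| + 2 * G ≤ 2 ^ b * (|B (T + b) t p| + 2 * G) := by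
    intro b hb
    induction b with
    | zero => simp
    | succ b ih =>
      have hfresh : ∀ b' ≤ b, τ t b' ≠ p := fun b' hb' h => by
        have := (hS.bijOn t).injOn (by omega : b' < t) ha₀ (h.trans hτa₀.symm)
        omega
      have := hS.abs_apply_phase_le_succ t hblock hp (by omega) hfresh
      calc |B T t p| + 2 * G ≤ 2 ^ b * (|B (T + b) t p| + 2 * G) := ih (by omega)
        _ ≤ 2 ^ b * (2 * (|B (T + b + 1) t p| + G) + 2 * G) := by gcongr
        _ = 2 ^ (b + 1) * (|B (T + (b + 1)) t p| + 2 * G) := by ring_nf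
  have hpivot : |B (T + a₀) t p| ≤ ε := by
    rw [(hS.isSymm (choose_two_add_lt t.2 ha₀t).le).apply]
    exact hε a₀ p ha₀t hτa₀.symm
  have hε0 : 0 ≤ ε := (abs_nonneg _).trans hpivot
  rw [(hS.isSymm (Nat.choose_le_choose 2 t.2.le)).apply]
  calc |B T t p| ≤ 2 ^ a₀ * (|B (T + a₀) t p| + 2 * G) := by linarith [hdecay a₀ le_rfl]
    _ ≤ 2 ^ (t : ℕ) * (ε + 2 * G) := by
        gcongr
        norm_num

theorem leadingOffDiagLE_zero (hS : IsColumnSweep n τ B) {ε : ℝ} (hε0 : 0 ≤ ε)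
    (hε : ∀ (j : Fin n) (a : ℕ) (i : Fin n), a < j → (i : ℕ) = τ j a →
      |B ((j : ℕ).choose 2 + a) i j| ≤ ε) :
    ∀ t ≤ n, LeadingOffDiagLE (B 0) t (sweepConst t * ε) := by
  intro t ht
  induction t with
  | zero => intro u v _ hu; omega
  | succ t ih =>
    set tF : Fin n := ⟨t, ht⟩
    set T := t.choose 2
    set G := 2 ^ T * (sweepConst t * ε)
    have hG : 0 ≤ G := by positivity
    have hblock : LeadingOffDiagLE (B T) t G :=
      hS.leadingOffDiagLE_choose (by omega) (ih (by omega))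
    have hcol : ∀ u : Fin n, (u : ℕ) < t →
        |B 0 u tF| ≤ 2 ^ (t + 1).choose 2 * (1 + 2 ^ (T + 1) * sweepConst t) * ε := by
      intro u hu
      calc |B 0 u tF| ≤ 2 ^ T * (2 ^ t * (ε + 2 * G)) :=
            hS.abs_apply_zero_col_le tF
              (fun p hp => hS.abs_apply_phase_start_le tF (hε tF) hG hblock hp) hu
        _ = _ := by rw [choose_two_succ]; ring
    have hcol0 : 0 ≤ 2 ^ (t + 1).choose 2 * (1 + 2 ^ (T + 1) * sweepConst t) * ε := by positivity
    have hK : (sweepConst (t + 1) : ℝ) * ε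
        = sweepConst t * ε + 2 ^ (t + 1).choose 2 * (1 + 2 ^ (T + 1) * sweepConst t) * ε := by
      simp only [sweepConst]; push_cast; ring
    intro u v huv hu hv
    rw [hK]
    rcases Nat.lt_succ_iff_lt_or_eq.1 hu with hu | hu <;>
      rcases Nat.lt_succ_iff_lt_or_eq.1 hv with hv | hv
    · linarith [ih (by omega) u v huv hu hv]
    · have hvt : v = tF := Fin.ext hv
      subst hvt
      linarith [hcol u hu, mul_nonneg (Nat.cast_nonneg (sweepConst t) : (0 : ℝ) ≤ _) hε0]
    · have hut : u = tF := Fin.ext hu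
      subst hut
      rw [(hS.isSymm_zero).apply]
      linarith [hcol v hv, mul_nonneg (Nat.cast_nonneg (sweepConst t) : (0 : ℝ) ≤ _) hε0]
    · exact absurd (Fin.ext (hu.trans hv.symm)) huv

theorem sq_pivot_le (hS : IsColumnSweep n τ B) (j : Fin n) {a : ℕ} (ha : a < j) (i : Fin n)
    (hi : (i : ℕ) = τ j a) :
    B ((j : ℕ).choose 2 + a) i j ^ 2 ≤ offSq (B 0) - offSq (B (n.choose 2)) := by
  have hk := choose_two_add_lt j.2 ha
  have hstep : IsJacobiStep (B ((j : ℕ).choose 2 + a)) (B ((j : ℕ).choose 2 + a + 1)) i j := by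
    rw [hi]; exact hS.step j a j.2 ha
  have hij : i ≠ j := by
    have : τ j a < j := (hS.bijOn j).mapsTo ha
    omega
  have hdrop := hstep.offSq_eq (hS.isSymm hk.le) hij
  linarith [hS.offSq_antitone (Nat.zero_le _) hk.le, hS.offSq_antitone hk le_rfl]

theorem offSq_le (hS : IsColumnSweep n τ B) :
    offSq (B 0) ≤ n ^ 2 * sweepConst n ^ 2 * (offSq (B 0) - offSq (B (n.choose 2))) := by
  set ε := √(offSq (B 0) - offSq (B (n.choose 2)))
  have hdrop : 0 ≤ offSq (B 0) - offSq (B (n.choose 2)) :=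
    sub_nonneg.2 (hS.offSq_antitone (Nat.zero_le _) le_rfl)
  have hε : ∀ (j : Fin n) (a : ℕ) (i : Fin n), a < j → (i : ℕ) = τ j a →
      |B ((j : ℕ).choose 2 + a) i j| ≤ ε :=
    fun j a i ha hi => abs_le_sqrt (hS.sq_pivot_le j ha i hi)
  calc offSq (B 0) ≤ n ^ 2 * (sweepConst n * ε) ^ 2 :=
        offSq_le_of_leadingOffDiagLE (hS.leadingOffDiagLE_zero (sqrt_nonneg _) hε n le_rfl)
    _ = n ^ 2 * sweepConst n ^ 2 * (offSq (B 0) - offSq (B (n.choose 2))) := by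
        rw [mul_pow, sq_sqrt hdrop]; ring

end IsColumnSweep

def columnOrdering (τ : ℕ → ℕ → ℕ) (m : ℕ) : List (ℕ × ℕ) :=
  (List.range m).flatMap fun j => (List.range j).map fun a => (τ j a, j)

theorem columnOrdering_succ (τ : ℕ → ℕ → ℕ) (m : ℕ) :
    columnOrdering τ (m + 1) = columnOrdering τ m ++ (List.range m).map fun a => (τ m a, m) := by
  simp [columnOrdering, List.range_succ]

theorem length_columnOrdering (τ : ℕ → ℕ → ℕ) (m : ℕ) :
    (columnOrdering τ m).length = m.choose 2 := by
  induction m with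
  | zero => rfl
  | succ m ih => simp [columnOrdering_succ, ih, choose_two_succ]

theorem getElem_columnOrdering (τ : ℕ → ℕ → ℕ) {m j a : ℕ} (hj : j < m) (ha : a < j)
    (h : j.choose 2 + a < (columnOrdering τ m).length) :
    (columnOrdering τ m)[j.choose 2 + a] = (τ j a, j) := by
  induction m with
  | zero => omega
  | succ m ih =>
    simp only [columnOrdering_succ]
    rcases Nat.lt_succ_iff_lt_or_eq.1 hj with hj | rfl
    · have h' : j.choose 2 + a < (columnOrdering τ m).length := by
        rw [length_columnOrdering]; exact choose_two_add_lt hj ha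
      rw [List.getElem_append_left h']
      exact ih hj h'
    · rw [List.getElem_append_right (by rw [length_columnOrdering]; omega)]
      simp [length_columnOrdering]

theorem eq_columnOrdering_of_memBc {n : ℕ} {L : List (ℕ × ℕ)} (hL : memBc n L) :
    ∃ τ : ℕ → ℕ → ℕ, (∀ j, Set.BijOn (τ j) (Set.Iio j) (Set.Iio j)) ∧ L = columnOrdering τ n := by
  obtain ⟨τ, hτ, rfl⟩ := hL
  refine ⟨τ, hτ, ?_⟩
  -- column `0` contributes no pivots
  rcases n with _ | n
  · rfl
  · simp [columnOrdering, List.range_eq_range', List.range'_succ]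

theorem isColumnSweep_of_scalarSweep {n : ℕ} {L : List (ℕ × ℕ)} (hL : memBc n L)
    {A A' : Matrix (Fin n) (Fin n) ℝ} (hA : A.IsSymm) (h : ScalarSweep L A A') :
    ∃ (τ : ℕ → ℕ → ℕ) (B : ℕ → Matrix (Fin n) (Fin n) ℝ),
      IsColumnSweep n τ B ∧ B 0 = A ∧ B (n.choose 2) = A' := by
  obtain ⟨τ, hτ, rfl⟩ := eq_columnOrdering_of_memBc hL
  obtain ⟨B, φ, h0, hN, hstep⟩ := h
  rw [length_columnOrdering] at hN
  refine ⟨τ, B, ⟨hτ, h0 ▸ hA, fun j a hj ha => ?_⟩, h0, hN⟩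
  have hk : j.choose 2 + a < (columnOrdering τ n).length := by
    rw [length_columnOrdering]; exact choose_two_add_lt hj ha
  obtain ⟨hφ, hrot, hzero⟩ := hstep _ hk
  have hget : (columnOrdering τ n).get ⟨_, hk⟩ = (τ j a, j) := getElem_columnOrdering τ hj ha hk
  rw [hget] at hrot hzero
  exact ⟨φ _, hφ, hrot, hzero⟩

/-- Corollary 3.3: for the scalar cyclic Jacobi method, defined by any
ordering from `C_c^(n)` with rotation angles in `[-π/4, π/4]`, one sweep reduces the
off-norm: `S(A')² ≤ η_n S(A)²` with `0 ≤ η_n < 1` depending only on `n`. -/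
theorem statement9 :
    ∀ n : ℕ, 2 ≤ n →
      ∃ η : ℝ, 0 ≤ η ∧ η < 1 ∧
        ∀ L : List (ℕ × ℕ), memBc n L →
          ∀ A A' : Matrix (Fin n) (Fin n) ℝ, A.IsSymm →
            ScalarSweep L A A' → offSq A' ≤ η * offSq A := by
  intro n _
  set κ : ℝ := n ^ 2 * sweepConst n ^ 2
  have hκ : 0 ≤ κ := by positivity
  refine ⟨κ / (κ + 1), by positivity, (div_lt_one (by positivity)).2 (by linarith), ?_⟩
  intro L hL A A' hA hsweep
  obtain ⟨τ, B, hS, rfl, rfl⟩ := isColumnSweep_of_scalarSweep hL hA hsweep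
  have hbound := hS.offSq_le
  have hmono := hS.offSq_antitone (Nat.zero_le _) le_rfl
  rw [div_mul_eq_mul_div, le_div_iff₀ (by positivity)]
  nlinarith
end
end BlockJacobi
end

section
/- Let m ≥ 2 and O, O', O_1, O_2, …, O_{2t} ∈ O(P_m), t ≥ 1, with O ~w O_1 ~p O_2 ~w O_3 ~p O_4 ~w ⋯ ~w O_{2t−1} ~p O_{2t} ~w O'. Then there exist O_0', Õ_0 ∈ O(P_m) such that O ~p O_0' ~w O' and O ~w Õ_0 ~p O'. Moreover, if O_{2r} = O_{2r−1}(q_r) for 1 ≤ r ≤ t, then O_0' = O(q) and O' = Õ_0(q), where q = q_t ∘ q_{t−1} ∘ ⋯ ∘ q_1. -/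
namespace BlockJacobi

open scoped BigOperators

attribute [local instance] Classical.propDecidable

noncomputable section

/-! Relabelling by a permutation `q` of `{0, …, m-1}` acts injectively on the indices, so it
maps disjoint pairs to disjoint pairs and commutes with concatenation: it sends admissible
transpositions to admissible transpositions and shifts to shifts, hence preserves weak
equivalence. Pushing each weak equivalence of the chain through the later permutations turns
the chain into `O(q) ~w O'`; relabelling this by `q⁻¹` gives `O ~w O'(q⁻¹)`. -/

def relabel (q : ℕ → ℕ) (p : ℕ × ℕ) : ℕ × ℕ :=
  if q p.1 < q p.2 then (q p.1, q p.2) else (q p.2, q p.1)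

lemma pApply_eq_map (q : ℕ → ℕ) (L : List (ℕ × ℕ)) :
    pApply q L = L.map (relabel q) := rfl

lemma relabel_of_lt {q : ℕ → ℕ} {a b : ℕ} (h : q a < q b) : relabel q (a, b) = (q a, q b) :=
  if_pos h

lemma relabel_of_gt {q : ℕ → ℕ} {a b : ℕ} (h : q b < q a) : relabel q (a, b) = (q b, q a) :=
  if_neg (lt_asymm h)

lemma relabel_relabel (q q' : ℕ → ℕ) (p : ℕ × ℕ) :
    relabel q' (relabel q p) = relabel (q' ∘ q) p := by
  unfold relabel
  split_ifs <;> simp only [Function.comp_apply, Prod.mk.injEq] at * <;> omega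

lemma pApply_pApply (q q' : ℕ → ℕ) (L : List (ℕ × ℕ)) :
    pApply q' (pApply q L) = pApply (q' ∘ q) L := by
  simp only [pApply_eq_map, List.map_map]
  exact List.map_congr_left fun p _ => relabel_relabel q q' p

lemma pApply_congr {q q' : ℕ → ℕ} {s : Set ℕ} {L : List (ℕ × ℕ)}
    (hqq' : Set.EqOn q q' s) (hL : ∀ p ∈ L, p.1 ∈ s ∧ p.2 ∈ s) :
    pApply q L = pApply q' L := by
  refine List.map_congr_left fun p hp => ?_
  simp only [hqq' (hL p hp).1, hqq' (hL p hp).2]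

lemma pApply_id {L : List (ℕ × ℕ)} (hL : ∀ p ∈ L, p.1 ≤ p.2) : pApply id L = L := by
  rw [pApply_eq_map]
  conv_rhs => rw [← List.map_id L]
  refine List.map_congr_left fun p hp => ?_
  have := hL p hp
  unfold relabel
  simp only [id_eq] at *
  split_ifs <;> ext <;> simp only <;> omega

lemma relabel_pairSet (q : ℕ → ℕ) (p : ℕ × ℕ) :
    ({(relabel q p).1, (relabel q p).2} : Set ℕ) = q '' {p.1, p.2} := by
  rw [Set.image_pair]
  unfold relabel
  split_ifs
  · rfl
  · exact Set.pair_comm _ _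

lemma AdjSwapG.map_relabel {q : ℕ → ℕ} {s : Set ℕ} {L L' : List (ℕ × ℕ)}
    (hq : Set.InjOn q s) (hL : ∀ p ∈ L, p.1 ∈ s ∧ p.2 ∈ s) (h : AdjSwapG id L L') :
    AdjSwapG id (L.map (relabel q)) (L'.map (relabel q)) := by
  obtain ⟨l₁, l₂, a, b, hab, rfl, rfl⟩ := h
  have pairSet_subset : ∀ p ∈ l₁ ++ a :: b :: l₂, ({p.1, p.2} : Set ℕ) ⊆ s :=
    fun p hp => Set.pair_subset (hL p hp).1 (hL p hp).2
  refine ⟨l₁.map (relabel q), l₂.map (relabel q), relabel q a, relabel q b, ?_, ?_, ?_⟩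
  · rw [id, id, relabel_pairSet, relabel_pairSet,
      ← hq.image_inter (pairSet_subset a (by simp)) (pairSet_subset b (by simp))]
    simpa using hab
  all_goals simp

lemma ShiftG.map {α β : Type*} (f : α → β) {L L' : List α} (h : ShiftG L L') :
    ShiftG (L.map f) (L'.map f) := by
  obtain ⟨l₁, l₂, rfl, rfl⟩ := h
  exact ⟨l₁.map f, l₂.map f, List.map_append .., List.map_append ..⟩

lemma perm_of_reflTransGen {α : Type*} {r : List α → List α → Prop}
    (hr : ∀ L L', r L L' → L.Perm L') {L L' : List α} (h : Relation.ReflTransGen r L L') :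
    L.Perm L' := by
  induction h with
  | refl => rfl
  | tail _ hstep ih => exact ih.trans (hr _ _ hstep)

lemma AdjSwapG.perm {α : Type*} {pr : α → ℕ × ℕ} {L L' : List α} (h : AdjSwapG pr L L') :
    L.Perm L' := by
  obtain ⟨l₁, l₂, a, b, -, rfl, rfl⟩ := h
  exact (List.Perm.swap b a l₂).append_left l₁

lemma EquivG.perm {α : Type*} {pr : α → ℕ × ℕ} {L L' : List α} (h : EquivG pr L L') :
    L.Perm L' :=
  perm_of_reflTransGen (fun _ _ => AdjSwapG.perm) h

lemma ShiftG.perm {α : Type*} {L L' : List α} (h : ShiftG L L') : L.Perm L' := by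
  obtain ⟨l₁, l₂, rfl, rfl⟩ := h
  exact List.perm_append_comm

lemma WeakG.perm {α : Type*} {pr : α → ℕ × ℕ} {L L' : List α} (h : WeakG pr L L') :
    L.Perm L' :=
  perm_of_reflTransGen (fun _ _ hstep => hstep.elim EquivG.perm ShiftG.perm) h

lemma PEquivL.map_relabel {q : ℕ → ℕ} {s : Set ℕ} {L L' : List (ℕ × ℕ)}
    (hq : Set.InjOn q s) (hL : ∀ p ∈ L, p.1 ∈ s ∧ p.2 ∈ s) (h : PEquivL L L') :
    PEquivL (L.map (relabel q)) (L'.map (relabel q)) := by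
  induction h with
  | refl => exact .refl
  | tail hL₁ hstep ih =>
      exact ih.tail (hstep.map_relabel hq fun p hp => hL p ((EquivG.perm hL₁).mem_iff.2 hp))

lemma WeakEq.map_relabel {q : ℕ → ℕ} {s : Set ℕ} {L L' : List (ℕ × ℕ)}
    (hq : Set.InjOn q s) (hL : ∀ p ∈ L, p.1 ∈ s ∧ p.2 ∈ s) (h : WeakEq L L') :
    WeakEq (L.map (relabel q)) (L'.map (relabel q)) := by
  induction h with
  | refl => exact .refl
  | @tail L₁ L₂ hL₁ hstep ih =>
      have hL₁s : ∀ p ∈ L₁, p.1 ∈ s ∧ p.2 ∈ s :=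
        fun p hp => hL p ((WeakG.perm hL₁).mem_iff.2 hp)
      exact ih.tail (hstep.imp (PEquivL.map_relabel hq hL₁s) (ShiftG.map _))

lemma isPermOn_compSeq {m t : ℕ} {q : ℕ → ℕ → ℕ}
    (hq : ∀ r, 1 ≤ r → r ≤ t → IsPermOn m (q r)) : IsPermOn m (compSeq q t) := by
  induction t with
  | zero => exact Set.bijOn_id _
  | succ t ih =>
      exact (hq (t + 1) (by omega) le_rfl).comp (ih fun r h1 h2 => hq r h1 (by omega))

lemma SeqOn.mem_Iio {m : ℕ} {L : List (ℕ × ℕ)} (h : SeqOn m L) :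
    ∀ p ∈ L, p.1 ∈ Set.Iio m ∧ p.2 ∈ Set.Iio m :=
  fun p hp => ⟨(h.1 p hp).1.trans (h.1 p hp).2, (h.1 p hp).2⟩

lemma SeqOn.map_relabel {m : ℕ} {q : ℕ → ℕ} {L : List (ℕ × ℕ)} (hq : IsPermOn m q)
    (h : SeqOn m L) : SeqOn m (L.map (relabel q)) := by
  constructor
  · simp only [List.mem_map]
    rintro _ ⟨p, hp, rfl⟩
    obtain ⟨h1, h2⟩ := h.mem_Iio p hp
    have hne : q p.1 ≠ q p.2 := fun he => (h.1 p hp).1.ne (hq.injOn h1 h2 he)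
    have := hq.mapsTo h1
    have := hq.mapsTo h2
    simp only [Set.mem_Iio] at *
    unfold relabel
    split_ifs <;> simp only <;> omega
  · intro i j hij hjm
    obtain ⟨a, ha, rfl⟩ := hq.surjOn (hij.trans hjm : i ∈ Set.Iio m)
    obtain ⟨b, hb, rfl⟩ := hq.surjOn (hjm : j ∈ Set.Iio m)
    rcases lt_trichotomy a b with hab | rfl | hab
    · exact List.mem_map.2 ⟨(a, b), h.2 a b hab hb, relabel_of_lt hij⟩
    · exact absurd hij (lt_irrefl _)
    · exact List.mem_map.2 ⟨(b, a), h.2 b a hab ha, relabel_of_gt hij⟩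

lemma weakEq_pApply_compSeq {m t : ℕ} {Oseq : ℕ → List (ℕ × ℕ)} {q : ℕ → ℕ → ℕ}
    (h0 : SeqOn m (Oseq 0))
    (hq : ∀ r, 1 ≤ r → r ≤ t → IsPermOn m (q r))
    (hw0 : WeakEq (Oseq 0) (Oseq 1))
    (hp : ∀ r, 1 ≤ r → r ≤ t → Oseq (2 * r) = pApply (q r) (Oseq (2 * r - 1)))
    (hw : ∀ r, 1 ≤ r → r ≤ t → WeakEq (Oseq (2 * r)) (Oseq (2 * r + 1))) :
    ∀ r ≤ t, WeakEq (pApply (compSeq q r) (Oseq 0)) (Oseq (2 * r + 1)) := by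
  intro r hr
  induction r with
  | zero => rwa [compSeq, pApply_id fun p hp => (h0.1 p hp).1.le]
  | succ r ih =>
      have hOseq : Oseq (2 * (r + 1)) = pApply (q (r + 1)) (Oseq (2 * r + 1)) := by
        rw [hp (r + 1) (by omega) hr, show 2 * (r + 1) - 1 = 2 * r + 1 by omega]
      have hrelabelled : SeqOn m (pApply (compSeq q r) (Oseq 0)) :=
        h0.map_relabel (isPermOn_compSeq fun r' h1 h2 => hq r' h1 (by omega))
      have step :=
        (ih (by omega)).map_relabel (hq (r + 1) (by omega) hr).injOn hrelabelled.mem_Iio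
      rw [← pApply_eq_map, ← pApply_eq_map, pApply_pApply, ← hOseq] at step
      exact step.trans (hw (r + 1) (by omega) hr)

lemma exists_weakEq_and_eq_pApply {m : ℕ} {Q : ℕ → ℕ} {L L' : List (ℕ × ℕ)}
    (hQ : IsPermOn m Q) (hL : SeqOn m L) (hL' : SeqOn m L') (h : WeakEq (pApply Q L) L') :
    ∃ L'', SeqOn m L'' ∧ WeakEq L L'' ∧ L' = pApply Q L'' := by
  set Q' := Function.invFunOn Q (Set.Iio m)
  have hinv : Set.InvOn Q' Q (Set.Iio m) (Set.Iio m) := hQ.invOn_invFunOn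
  have hQ' : IsPermOn m Q' := hQ.symm hinv.symm
  refine ⟨pApply Q' L', hL'.map_relabel hQ', ?_, ?_⟩
  · have := h.map_relabel hQ'.injOn (hL.map_relabel hQ).mem_Iio
    rwa [← pApply_eq_map, ← pApply_eq_map, pApply_pApply,
      pApply_congr (q := Q' ∘ Q) (q' := id) hinv.1 hL.mem_Iio,
      pApply_id fun p hp => (hL.1 p hp).1.le] at this
  · rw [pApply_pApply, pApply_congr (q := Q ∘ Q') (q' := id) hinv.2 hL'.mem_Iio,
      pApply_id fun p hp => (hL'.1 p hp).1.le]

/-- `Oseq k` is `O_k`, with `Oseq 0 = O` and `Oseq (2 * t + 1) = O'`. -/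
theorem statement13_general (m t : ℕ)
    (Oseq : ℕ → List (ℕ × ℕ)) (q : ℕ → ℕ → ℕ)
    (hseq : ∀ k ≤ 2 * t + 1, SeqOn m (Oseq k))
    (hq : ∀ r, 1 ≤ r → r ≤ t → IsPermOn m (q r))
    (hw0 : WeakEq (Oseq 0) (Oseq 1))
    (hp : ∀ r, 1 ≤ r → r ≤ t → Oseq (2 * r) = pApply (q r) (Oseq (2 * r - 1)))
    (hw : ∀ r, 1 ≤ r → r ≤ t → WeakEq (Oseq (2 * r)) (Oseq (2 * r + 1))) :
    ∃ O₀ Ot₀ : List (ℕ × ℕ), SeqOn m O₀ ∧ SeqOn m Ot₀ ∧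
      O₀ = pApply (compSeq q t) (Oseq 0) ∧ WeakEq O₀ (Oseq (2 * t + 1)) ∧
      WeakEq (Oseq 0) Ot₀ ∧ Oseq (2 * t + 1) = pApply (compSeq q t) Ot₀ := by
  have hO : SeqOn m (Oseq 0) := hseq 0 (Nat.zero_le _)
  have hQ : IsPermOn m (compSeq q t) := isPermOn_compSeq hq
  have hchain := weakEq_pApply_compSeq hO hq hw0 hp hw t le_rfl
  obtain ⟨Ot₀, hOt₀, hwOt₀, hOt₀_eq⟩ :=
    exists_weakEq_and_eq_pApply hQ hO (hseq _ le_rfl) hchain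
  exact ⟨_, Ot₀, hO.map_relabel hQ, hOt₀, rfl, hchain, hwOt₀, hOt₀_eq⟩

/-- Proposition 2.9: a chain
`O ~w O₁ ~p O₂ ~w O₃ ~p ⋯ ~w O_{2t-1} ~p O_{2t} ~w O'` can be reduced to the
canonical forms `O ~p O₀' ~w O'` and `O ~w Õ₀ ~p O'`; moreover, if
`O_{2r} = O_{2r-1}(q_r)` then `O₀' = O(q)` and `O' = Õ₀(q)` with
`q = q_t ∘ q_{t-1} ∘ ⋯ ∘ q_1`. Here `Oseq k` denotes `O_k` (`Oseq 0 = O`,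
`Oseq (2t+1) = O'`). -/
theorem statement13 (m t : ℕ) (hm : 2 ≤ m) (ht : 1 ≤ t)
    (Oseq : ℕ → List (ℕ × ℕ)) (q : ℕ → ℕ → ℕ)
    (hseq : ∀ k ≤ 2 * t + 1, SeqOn m (Oseq k))
    (hq : ∀ r, 1 ≤ r → r ≤ t → IsPermOn m (q r))
    (hw0 : WeakEq (Oseq 0) (Oseq 1))
    (hp : ∀ r, 1 ≤ r → r ≤ t → Oseq (2 * r) = pApply (q r) (Oseq (2 * r - 1)))
    (hw : ∀ r, 1 ≤ r → r ≤ t → WeakEq (Oseq (2 * r)) (Oseq (2 * r + 1))) :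
    ∃ O₀ Ot₀ : List (ℕ × ℕ), SeqOn m O₀ ∧ SeqOn m Ot₀ ∧
      O₀ = pApply (compSeq q t) (Oseq 0) ∧ WeakEq O₀ (Oseq (2 * t + 1)) ∧
      WeakEq (Oseq 0) Ot₀ ∧ Oseq (2 * t + 1) = pApply (compSeq q t) Ot₀ :=
  statement13_general m t Oseq q hseq hq hw0 hp hw
end
end BlockJacobi
end

section
/- Let π = (n_1,…,n_m) (m ≥ 2) be a partition of n, let (i,j) ∈ P_m, and let Û be an orthogonal matrix of order n_i+n_j. Then the block Jacobi annihilator R = R_ij(Û) satisfies ‖R‖₂ = 1 (spectral norm) whenever m ≥ 3, while in the case m = 2 (so that (i,j) = (1,2)) one has R = 0. -/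
namespace BlockJacobi

open scoped BigOperators

attribute [local instance] Classical.propDecidable

noncomputable section

/-!
`R = R_ij(Û)` is the matrix of `a ↦ vec_π (N_ij (Uᵀ A U))` with `A = vec_{π,0}⁻¹ a`. Both `A`
and `Uᵀ A U` are symmetric, `A` vanishes on the diagonal blocks and orthogonal conjugation
preserves the Frobenius norm, so
`‖R a‖² ≤ ‖vec_π (Uᵀ A U)‖² ≤ ½ ‖Uᵀ A U‖_F² = ½ ‖A‖_F² = ‖a‖²`.
If `m ≥ 3`, take a block `r ∉ {i, j}`, an index `u` in it and `a = e_q` for an entry `q` pairing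
`u` with block `i`. Then `U` fixes `e_u`, so `Uᵀ A U` vanishes on the diagonal blocks and on the
pivot submatrix, all the inequalities are equalities, and `‖R e_q‖ = 1`. If `m = 2`, the pivot
submatrix is the whole matrix and `N_12` annihilates everything.
-/

open scoped Matrix

section Blocks

variable {c : ℕ → ℕ}

lemma off_succ (c : ℕ → ℕ) (r : ℕ) : off c (r + 1) = off c r + c r :=
  Finset.sum_range_succ c r

lemma off_mono (c : ℕ → ℕ) {a b : ℕ} (h : a ≤ b) : off c a ≤ off c b :=
  Finset.sum_le_sum_of_subset (Finset.range_subset_range.2 h)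

lemma off_lt_off {r m : ℕ} (hr : r < m) (hpos : 1 ≤ c r) : off c r < off c m := by
  have := off_mono c (Nat.succ_le_of_lt hr)
  rw [off_succ] at this
  omega

lemma inBlk_off {r : ℕ} (hpos : 1 ≤ c r) : inBlk c r (off c r) :=
  ⟨le_rfl, by omega⟩

lemma inBlk_unique {a b t : ℕ} (ha : inBlk c a t) (hb : inBlk c b t) : a = b := by
  by_contra hne
  wlog hab : a < b generalizing a b
  · exact this hb ha (Ne.symm hne) (by omega)
  have := off_mono c (Nat.succ_le_of_lt hab)
  rw [off_succ] at this
  exact absurd hb.1 (by have := ha.2; omega)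

lemma exists_inBlk_of_lt_off {m t : ℕ} (ht : t < off c m) : ∃ r < m, inBlk c r t := by
  induction m with
  | zero => simp [off] at ht
  | succ k ih =>
    by_cases h : t < off c k
    · obtain ⟨r, hr, hb⟩ := ih h
      exact ⟨r, Nat.lt_succ_of_lt hr, hb⟩
    · exact ⟨k, Nat.lt_succ_self k, not_lt.1 h, by rwa [off_succ] at ht⟩

lemma sameBlk_comm {m s t : ℕ} : sameBlk c m s t ↔ sameBlk c m t s :=
  ⟨fun ⟨r, hr, hs, ht⟩ => ⟨r, hr, ht, hs⟩, fun ⟨r, hr, ht, hs⟩ => ⟨r, hr, hs, ht⟩⟩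

lemma not_sameBlk_of_inBlk {m r r' s t : ℕ} (hs : inBlk c r s) (ht : inBlk c r' t)
    (hne : r ≠ r') : ¬ sameBlk c m s t := by
  rintro ⟨k, -, hks, hkt⟩
  exact hne ((inBlk_unique hs hks).trans (inBlk_unique hkt ht))

end Blocks

section OffBlockNorm

variable {n m : ℕ} {c : ℕ → ℕ}

/-- `‖vec_π M‖²`. -/
def offBlockNormSq (m : ℕ) (c : ℕ → ℕ) (M : Matrix (Fin n) (Fin n) ℝ) : ℝ :=
  ∑ p : OffI n m c, M p.1.1 p.1.2 ^ 2

lemma offBlockNormSq_eq_sum (M : Matrix (Fin n) (Fin n) ℝ) :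
    offBlockNormSq m c M =
      ∑ s : Fin n, ∑ t : Fin n, if (s : ℕ) < t ∧ ¬ sameBlk c m s t then M s t ^ 2 else 0 := by
  rw [← Fintype.sum_prod_type'
    (fun (s t : Fin n) => if (s : ℕ) < t ∧ ¬ sameBlk c m s t then M s t ^ 2 else 0),
    ← Finset.sum_filter]
  exact (Finset.sum_subtype (p := fun z : Fin n × Fin n => (z.1 : ℕ) < z.2 ∧ ¬ sameBlk c m z.1 z.2)
    _ (by simp) (fun z => M z.1 z.2 ^ 2)).symm

lemma sum_sq_eq_two_mul_offBlockNormSq_add {M : Matrix (Fin n) (Fin n) ℝ} (hM : Mᵀ = M) :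
    ∑ s, ∑ t, M s t ^ 2 = 2 * offBlockNormSq m c M +
      ∑ s : Fin n, ∑ t : Fin n, if (s : ℕ) = t ∨ sameBlk c m s t then M s t ^ 2 else 0 := by
  have hsymm : ∀ s t, M t s = M s t := fun s t => congrFun (congrFun hM s) t
  have hsplit : ∀ s t : Fin n, M s t ^ 2 =
      (if (s : ℕ) < t ∧ ¬ sameBlk c m s t then M s t ^ 2 else 0) +
      (if (t : ℕ) < s ∧ ¬ sameBlk c m t s then M t s ^ 2 else 0) +
      (if (s : ℕ) = t ∨ sameBlk c m s t then M s t ^ 2 else 0) := by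
    intro s t
    by_cases hb : sameBlk c m s t
    · rw [if_neg fun h => h.2 hb, if_neg fun h => h.2 (sameBlk_comm.1 hb), if_pos (Or.inr hb)]
      ring
    · have hb' : ¬ sameBlk c m t s := fun h => hb (sameBlk_comm.1 h)
      rcases lt_trichotomy (s : ℕ) t with h | h | h
      · rw [if_pos ⟨h, hb⟩, if_neg (by omega), if_neg (not_or.2 ⟨by omega, hb⟩)]; ring
      · rw [if_neg (by omega), if_neg (by omega), if_pos (Or.inl h)]; ring
      · rw [if_neg (by omega), if_pos ⟨h, hb'⟩, if_neg (not_or.2 ⟨by omega, hb⟩), hsymm]; ring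
  rw [Finset.sum_congr rfl fun s _ => Finset.sum_congr rfl fun t _ => hsplit s t]
  simp only [Finset.sum_add_distrib]
  rw [Finset.sum_comm
    (f := fun (s t : Fin n) => if (t : ℕ) < s ∧ ¬ sameBlk c m t s then M t s ^ 2 else 0),
    ← offBlockNormSq_eq_sum]
  ring

lemma two_mul_offBlockNormSq_le {M : Matrix (Fin n) (Fin n) ℝ} (hM : Mᵀ = M) :
    2 * offBlockNormSq m c M ≤ ∑ s, ∑ t, M s t ^ 2 := by
  rw [sum_sq_eq_two_mul_offBlockNormSq_add hM, le_add_iff_nonneg_right]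
  exact Finset.sum_nonneg fun s _ => Finset.sum_nonneg fun t _ => by positivity

lemma sum_sq_eq_two_mul_offBlockNormSq {M : Matrix (Fin n) (Fin n) ℝ} (hM : Mᵀ = M)
    (hzero : ∀ s t : Fin n, (s : ℕ) = t ∨ sameBlk c m s t → M s t = 0) :
    ∑ s, ∑ t, M s t ^ 2 = 2 * offBlockNormSq m c M := by
  rw [sum_sq_eq_two_mul_offBlockNormSq_add hM, add_eq_left]
  exact Finset.sum_eq_zero fun s _ => Finset.sum_eq_zero fun t _ => by
    split_ifs with h <;> simp [hzero s t, h]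

lemma sum_sq_eq_trace (M : Matrix (Fin n) (Fin n) ℝ) :
    ∑ s, ∑ t, M s t ^ 2 = (Mᵀ * M).trace := by
  simp only [Matrix.trace, Matrix.diag, Matrix.mul_apply, Matrix.transpose_apply, sq]
  exact Finset.sum_comm

lemma sum_sq_conj {U : Matrix (Fin n) (Fin n) ℝ} (hU : Orth U) (A : Matrix (Fin n) (Fin n) ℝ) :
    ∑ s, ∑ t, (Uᵀ * A * U) s t ^ 2 = ∑ s, ∑ t, A s t ^ 2 := by
  have hU' : U * Uᵀ = 1 := mul_eq_one_comm.mp hU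
  rw [sum_sq_eq_trace, sum_sq_eq_trace]
  have : (Uᵀ * A * U)ᵀ * (Uᵀ * A * U) = Uᵀ * (Aᵀ * A * U) := by
    simp only [Matrix.transpose_mul, Matrix.transpose_transpose, Matrix.mul_assoc]
    rw [← Matrix.mul_assoc U Uᵀ, hU', Matrix.one_mul]
  rw [this, Matrix.trace_mul_comm, Matrix.mul_assoc, hU', Matrix.mul_one]

end OffBlockNorm

section SymOf

variable {n m : ℕ} {c : ℕ → ℕ}

lemma symOf_transpose (a : OffI n m c → ℝ) : (symOf a)ᵀ = symOf a := by
  ext s t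
  simp only [Matrix.transpose_apply, symOf]
  rcases lt_trichotomy (s : ℕ) t with h | h | h
  · simp [h, h.not_gt]
  · simp [h]
  · simp [h, h.not_gt]

lemma symOf_apply_offI (a : OffI n m c → ℝ) (p : OffI n m c) : symOf a p.1.1 p.1.2 = a p := by
  simp only [symOf, dif_pos p.2]
  rfl

lemma symOf_eq_zero (a : OffI n m c → ℝ) {s t : Fin n} (h : (s : ℕ) = t ∨ sameBlk c m s t) :
    symOf a s t = 0 := by
  rcases h with h | h
  · simp [symOf, h]
  · simp [symOf, h, sameBlk_comm.1 h]

lemma offBlockNormSq_symOf (a : OffI n m c → ℝ) : offBlockNormSq m c (symOf a) = ∑ p, a p ^ 2 := by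
  simp only [offBlockNormSq, symOf_apply_offI]

lemma sum_sq_symOf (a : OffI n m c → ℝ) :
    ∑ s, ∑ t, symOf a s t ^ 2 = 2 * ∑ p, a p ^ 2 := by
  rw [sum_sq_eq_two_mul_offBlockNormSq (symOf_transpose a) fun s t => symOf_eq_zero a,
    offBlockNormSq_symOf]

lemma symOf_add (a b : OffI n m c → ℝ) : symOf (a + b) = symOf a + symOf b := by
  ext s t
  simp only [symOf, Matrix.add_apply]
  split_ifs <;> first | rfl | simp

lemma symOf_smul (r : ℝ) (a : OffI n m c → ℝ) : symOf (r • a) = r • symOf a := by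
  ext s t
  simp only [symOf, Matrix.smul_apply]
  split_ifs <;> first | rfl | simp

lemma offI_mk_eq_iff {x y : Fin n} {h : (x : ℕ) < y ∧ ¬ sameBlk c m x y} {q : OffI n m c} :
    (⟨(x, y), h⟩ : OffI n m c) = q ↔ q.1.1 = x ∧ q.1.2 = y :=
  Subtype.ext_iff.trans (Prod.ext_iff.trans (and_congr eq_comm eq_comm))

lemma symOf_single (q : OffI n m c) :
    symOf (Pi.single q (1 : ℝ)) = Matrix.single q.1.1 q.1.2 1 + Matrix.single q.1.2 q.1.1 1 := by
  obtain ⟨⟨u, v⟩, huv, hb⟩ := q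
  dsimp only at huv hb
  have key : ∀ (x y : Fin n) (h : (x : ℕ) < y ∧ ¬ sameBlk c m x y),
      (Pi.single ⟨(u, v), huv, hb⟩ (1 : ℝ) : OffI n m c → ℝ) ⟨(x, y), h⟩ =
        if u = x ∧ v = y then 1 else 0 :=
    fun x y h => (Pi.single_apply _ 1 _).trans (if_congr offI_mk_eq_iff rfl rfl)
  ext s t
  simp only [symOf, Matrix.add_apply, Matrix.single_apply, key]
  split_ifs <;> (try casesm* _ ∧ _) <;> subst_vars
  all_goals norm_num at * <;> first | omega | tauto

end SymOf

section Annihilator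

variable {n m : ℕ} {c : ℕ → ℕ}

def annihLin (m : ℕ) (c : ℕ → ℕ) (i j : ℕ) (U : Matrix (Fin n) (Fin n) ℝ) :
    (OffI n m c → ℝ) →ₗ[ℝ] (OffI n m c → ℝ) where
  toFun a p := nij c i j (Uᵀ * symOf a * U) p.1.1 p.1.2
  map_add' a b := by
    ext p
    simp only [nij, symOf_add, Matrix.mul_add, Matrix.add_mul, Matrix.add_apply, Pi.add_apply]
    split_ifs <;> simp
  map_smul' r a := by
    ext p
    simp only [nij, symOf_smul, Matrix.mul_smul, Matrix.smul_mul, Matrix.smul_apply,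
      Pi.smul_apply, RingHom.id_apply]
    split_ifs <;> simp

lemma annih_eq_toMatrix' (i j : ℕ) (U : Matrix (Fin n) (Fin n) ℝ) :
    annih n m c i j U = LinearMap.toMatrix' (annihLin m c i j U) := by
  ext p q
  rw [LinearMap.toMatrix'_apply]
  rfl

lemma annih_mulVec_apply (i j : ℕ) (U : Matrix (Fin n) (Fin n) ℝ) (a : OffI n m c → ℝ)
    (p : OffI n m c) :
    (annih n m c i j U *ᵥ a) p = nij c i j (Uᵀ * symOf a * U) p.1.1 p.1.2 := by
  rw [annih_eq_toMatrix', LinearMap.toMatrix'_mulVec]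
  rfl

lemma transpose_mul_single_mul_apply (U : Matrix (Fin n) (Fin n) ℝ) (a b s t : Fin n) :
    (Uᵀ * Matrix.single a b (1 : ℝ) * U) s t = U a s * U b t := by
  simp [Matrix.mul_apply, Matrix.single_apply, ite_and, Finset.sum_ite_eq, ite_mul]

lemma conj_symOf_single_apply (U : Matrix (Fin n) (Fin n) ℝ) (q : OffI n m c) (s t : Fin n) :
    (Uᵀ * symOf (Pi.single q 1) * U) s t = U q.1.1 s * U q.1.2 t + U q.1.2 s * U q.1.1 t := by
  rw [symOf_single, Matrix.mul_add, Matrix.add_mul, Matrix.add_apply,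
    transpose_mul_single_mul_apply, transpose_mul_single_mul_apply]

end Annihilator

section AnnihilatorNorm

variable {n m : ℕ} {c : ℕ → ℕ} {i j : ℕ} {U : Matrix (Fin n) (Fin n) ℝ}

lemma offBlockNormSq_nij_le (M : Matrix (Fin n) (Fin n) ℝ) :
    offBlockNormSq m c (nij c i j M) ≤ offBlockNormSq m c M :=
  Finset.sum_le_sum fun p _ => by
    unfold nij
    split_ifs
    · simpa using sq_nonneg (M p.1.1 p.1.2)
    · exact le_rfl

lemma transpose_conj_symOf (U : Matrix (Fin n) (Fin n) ℝ) (a : OffI n m c → ℝ) :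
    (Uᵀ * symOf a * U)ᵀ = Uᵀ * symOf a * U := by
  simp only [Matrix.transpose_mul, Matrix.transpose_transpose, symOf_transpose, Matrix.mul_assoc]

lemma sum_sq_annih_mulVec_le (hU : Orth U) (a : OffI n m c → ℝ) :
    ∑ p, (annih n m c i j U *ᵥ a) p ^ 2 ≤ ∑ p, a p ^ 2 := by
  have h := two_mul_offBlockNormSq_le (m := m) (c := c) (transpose_conj_symOf U a)
  rw [sum_sq_conj hU, sum_sq_symOf] at h
  calc ∑ p, (annih n m c i j U *ᵥ a) p ^ 2
      = offBlockNormSq m c (nij c i j (Uᵀ * symOf a * U)) := by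
        simp only [annih_mulVec_apply, offBlockNormSq]
    _ ≤ offBlockNormSq m c (Uᵀ * symOf a * U) := offBlockNormSq_nij_le _
    _ ≤ ∑ p, a p ^ 2 := by linarith

lemma IsElem.apply_left (hU : IsElem c i j U) {u : Fin n} (hu : ¬ inPiv c i j u) (t : Fin n) :
    U u t = if u = t then 1 else 0 :=
  hU u t fun h => hu h.1

lemma IsElem.apply_right (hU : IsElem c i j U) {u : Fin n} (hu : ¬ inPiv c i j u) (t : Fin n) :
    U t u = if t = u then 1 else 0 :=
  hU t u fun h => hu h.2

lemma not_inPiv_of_sameBlk {m u w : ℕ} (hu : ¬ inPiv c i j u) (huw : sameBlk c m u w) :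
    ¬ inPiv c i j w := by
  obtain ⟨r, -, hru, hrw⟩ := huw
  rintro (h | h)
  · exact hu (Or.inl (inBlk_unique hrw h ▸ hru))
  · exact hu (Or.inr (inBlk_unique hrw h ▸ hru))

/-- The left side is the `(s, t)` entry of `Uᵀ (e_u e_vᵀ + e_v e_uᵀ) U`. Since `U` fixes `e_u`,
this matrix lives on row and column `u`, away from the pivot submatrix, and on the diagonal
blocks it only meets entries of row `v` of `U` that vanish. -/
lemma conj_pair_eq_zero (hU : IsElem c i j U) {u v : Fin n} (hu : ¬ inPiv c i j u)
    (huv : ¬ sameBlk c m u v) (hne : u ≠ v) {s t : Fin n}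
    (hst : (s : ℕ) = t ∨ sameBlk c m s t ∨ (inPiv c i j s ∧ inPiv c i j t)) :
    U u s * U v t + U v s * U u t = 0 := by
  have hv : ∀ w : Fin n, w = u ∨ sameBlk c m u w → U v w = 0 := by
    rintro w (rfl | hw)
    · rw [hU.apply_right hu, if_neg hne.symm]
    · rw [hU.apply_right (not_inPiv_of_sameBlk hu hw), if_neg]
      rintro rfl
      exact huv hw
  rw [hU.apply_left hu s, hU.apply_left hu t]
  by_cases hs : u = s
  · subst hs
    rw [if_pos rfl, one_mul, hv u (Or.inl rfl), zero_mul, add_zero]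
    rcases hst with h | h | h
    · exact hv t (Or.inl (Fin.ext h).symm)
    · exact hv t (Or.inr h)
    · exact absurd h.1 hu
  by_cases ht : u = t
  · subst ht
    rw [if_neg hs, zero_mul, zero_add, if_pos rfl, mul_one]
    rcases hst with h | h | h
    · exact absurd (Fin.ext h).symm hs
    · exact hv s (Or.inr (sameBlk_comm.1 h))
    · exact absurd h.2 hu
  rw [if_neg hs, if_neg ht, zero_mul, mul_zero, add_zero]

lemma sum_sq_single (q : OffI n m c) : ∑ p, (Pi.single q (1 : ℝ) : OffI n m c → ℝ) p ^ 2 = 1 := by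
  rw [Fintype.sum_eq_single q fun p hp => by rw [Pi.single_eq_of_ne hp, sq, mul_zero],
    Pi.single_eq_same, one_pow]

lemma sum_sq_annih_col (hUe : IsElem c i j U) (hUo : Orth U) (q : OffI n m c)
    (hq : ¬ inPiv c i j q.1.1 ∨ ¬ inPiv c i j q.1.2) :
    ∑ p, annih n m c i j U p q ^ 2 = 1 := by
  set B := Uᵀ * symOf (Pi.single q 1) * U with hBdef
  have hne : q.1.1 ≠ q.1.2 := fun h => q.2.1.ne (congrArg Fin.val h)
  have hB : ∀ s t : Fin n, (s : ℕ) = t ∨ sameBlk c m s t ∨ (inPiv c i j s ∧ inPiv c i j t) →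
      B s t = 0 := by
    intro s t hst
    rw [hBdef, conj_symOf_single_apply]
    rcases hq with hq | hq
    · exact conj_pair_eq_zero hUe hq q.2.2 hne hst
    · rw [add_comm]
      exact conj_pair_eq_zero hUe hq (mt sameBlk_comm.1 q.2.2) hne.symm hst
  have hcol : ∀ p : OffI n m c, annih n m c i j U p q = B p.1.1 p.1.2 := by
    intro p
    change nij c i j B p.1.1 p.1.2 = _
    unfold nij
    split_ifs with h
    · exact (hB _ _ (Or.inr (Or.inr h))).symm
    · rfl
  have h2 := sum_sq_eq_two_mul_offBlockNormSq (transpose_conj_symOf U _)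
    fun s t h => hB s t (h.imp_right Or.inl)
  rw [sum_sq_conj hUo, sum_sq_symOf, sum_sq_single] at h2
  simp only [hcol]
  unfold offBlockNormSq at h2
  linarith

end AnnihilatorNorm

lemma specNorm_eq_one {ι : Type*} [Fintype ι] {M : Matrix ι ι ℝ}
    (hle : ∀ x, ∑ k, (M *ᵥ x) k ^ 2 ≤ ∑ k, x k ^ 2)
    (hattain : ∃ x, ∑ k, x k ^ 2 = 1 ∧ ∑ k, (M *ᵥ x) k ^ 2 = 1) : specNorm M = 1 := by
  obtain ⟨x, hx, hMx⟩ := hattain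
  refine IsGreatest.csSup_eq
    ⟨⟨x, by rw [enorm, hx, Real.sqrt_one], by rw [enorm, hMx, Real.sqrt_one]⟩, ?_⟩
  rintro _ ⟨y, hy, rfl⟩
  rw [enorm, Real.sqrt_eq_one] at hy
  exact Real.sqrt_le_one.2 (hy ▸ hle y)

section Pivots

variable {n m : ℕ} {c : ℕ → ℕ}

lemma exists_offI_not_inPiv (hpos : ∀ r < m, 1 ≤ c r) (hsum : off c m = n) {i j r : ℕ}
    (hi : i < m) (hr : r < m) (hri : r ≠ i) (hrj : r ≠ j) :
    ∃ q : OffI n m c, ¬ inPiv c i j q.1.1 ∨ ¬ inPiv c i j q.1.2 := by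
  let u : Fin n := ⟨off c r, hsum ▸ off_lt_off hr (hpos r hr)⟩
  let v : Fin n := ⟨off c i, hsum ▸ off_lt_off hi (hpos i hi)⟩
  have hu : inBlk c r u := inBlk_off (hpos r hr)
  have hv : inBlk c i v := inBlk_off (hpos i hi)
  have hupiv : ¬ inPiv c i j u := by
    rintro (h | h)
    exacts [hri (inBlk_unique hu h), hrj (inBlk_unique hu h)]
  have huv : ¬ sameBlk c m u v := not_sameBlk_of_inBlk hu hv hri
  rcases lt_or_gt_of_ne (fun h : (u : ℕ) = v => huv ⟨i, hi, h ▸ hv, hv⟩) with h | h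
  · exact ⟨⟨(u, v), h, huv⟩, Or.inl hupiv⟩
  · exact ⟨⟨(v, u), h, mt sameBlk_comm.1 huv⟩, Or.inr hupiv⟩

lemma inPiv_zero_one (hsum : off c 2 = n) (t : Fin n) : inPiv c 0 1 t := by
  obtain ⟨r, hr, ht⟩ := exists_inBlk_of_lt_off (hsum ▸ t.2 : (t : ℕ) < off c 2)
  interval_cases r
  exacts [Or.inl ht, Or.inr ht]

lemma annih_eq_zero_of_forall_inPiv {i j : ℕ} {U : Matrix (Fin n) (Fin n) ℝ}
    (h : ∀ t : Fin n, inPiv c i j t) : annih n m c i j U = 0 := by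
  ext p q
  exact if_pos ⟨h _, h _⟩

end Pivots

/-- from Theorem 2.12: the block Jacobi annihilator `R = R_{ij}(Û)`
(here parametrized by the orthogonal elementary block matrix `U` with pivot pair
`(i,j)` and pivot submatrix `Û`) satisfies `‖R‖₂ = 1` when `m ≥ 3`, while for
`m = 2` (so `(i,j) = (1,2)`) one has `R = 0`. -/
theorem statement14 (n m : ℕ) (c : ℕ → ℕ) (hpart : IsPartition n m c)
    (i j : ℕ) (hij : i < j) (hj : j < m)
    (U : Matrix (Fin n) (Fin n) ℝ) (hUe : IsElem c i j U) (hUo : Orth U) :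
    (3 ≤ m → specNorm (annih n m c i j U) = 1) ∧
    (m = 2 → annih n m c i j U = 0) := by
  obtain ⟨-, hpos, hsum⟩ := hpart
  refine ⟨fun hm3 => ?_, fun hm2 => ?_⟩
  · obtain ⟨r, hr, hri, hrj⟩ : ∃ r < m, r ≠ i ∧ r ≠ j :=
      ⟨if 0 < i then 0 else if 1 < j then 1 else 2, by split_ifs <;> omega⟩
    obtain ⟨q, hq⟩ := exists_offI_not_inPiv hpos hsum (hij.trans hj) hr hri hrj
    refine specNorm_eq_one (sum_sq_annih_mulVec_le hUo) ⟨Pi.single q 1, sum_sq_single q, ?_⟩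
    rw [Matrix.mulVec_single_one]
    exact sum_sq_annih_col hUe hUo q hq
  · subst hm2
    obtain ⟨rfl, rfl⟩ : i = 0 ∧ j = 1 := by omega
    exact annih_eq_zero_of_forall_inPiv (inPiv_zero_one hsum)
end
end BlockJacobi
end
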